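/- arXiv:math/0409329 — 10 statements merged into one kernel-verified Lean document; each statement's English description precedes it below -/
import Mathlib

section
/- For all natural numbers k < d, the truncated binomial P_{k;d}(x) = ∑_{i=0}^{k} (d choose i)·x^i has no multiple roots; that is, P_{k;d} and its derivative P′_{k;d} have no common root in ℂ (equivalently, P_{k;d} is squarefree in ℂ[x]). -/
/-!
Differentiating term by term and using `(i + 1) * C(d, i + 1) = d * C(d - 1, i)` together with
Pascal's rule gives `(x + 1) P'_{k;d} = d (P_{k;d} - C(d - 1, k) x^k)`. At a common root `z` of
`P_{k;d}` and `P'_{k;d}` this forces `d C(d - 1, k) z^k = 0`, and `C(d - 1, k) ≠ 0` because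
`k < d`; hence `z = 0`, which is impossible since `P_{k;d}(0) = 1`. Over `ℂ`, having no common
root with the derivative means being separable, hence squarefree.
-/

open Polynomial

/-- The truncated binomial `P_{k;d}(x) = ∑_{i=0}^{k} (d choose i) x^i` as a complex
polynomial. -/
noncomputable def truncBinom (d k : ℕ) : Polynomial ℂ :=
  ∑ i ∈ Finset.range (k + 1), Polynomial.C (Nat.choose d i : ℂ) * Polynomial.X ^ i

theorem Polynomial.separable_of_eval_derivative_ne_zero {K : Type*} [Field K] [IsAlgClosed K]
    {p : K[X]} (h : ∀ z, p.eval z = 0 → p.derivative.eval z ≠ 0) : p.Separable :=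
  (isCoprime_iff_aeval_ne_zero_of_isAlgClosed K K p _).mpr fun z ↦ by
    simp only [coe_aeval_eq_eval]
    exact (em (p.eval z = 0)).elim (fun hz ↦ .inr (h z hz)) .inl

lemma truncBinom_succ (d k : ℕ) :
    truncBinom d (k + 1) = truncBinom d k + C (d.choose (k + 1) : ℂ) * X ^ (k + 1) :=
  Finset.sum_range_succ _ _

lemma eval_zero_truncBinom (d k : ℕ) : (truncBinom d k).eval 0 = 1 := by
  simp [truncBinom, eval_finsetSum, Finset.sum_range_succ']

lemma X_add_one_mul_derivative_truncBinom (n k : ℕ) :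
    (X + 1) * derivative (truncBinom (n + 1) k)
      = C (n + 1 : ℂ) * (truncBinom (n + 1) k - C (n.choose k : ℂ) * X ^ k) := by
  induction k with
  | zero => simp [truncBinom]
  | succ k ih =>
    have hpascal : ((n + 1).choose (k + 1) : ℂ) = n.choose k + n.choose (k + 1) := by
      exact_mod_cast Nat.choose_succ_succ' n k
    have habsorb : ((n + 1).choose (k + 1) : ℂ) * (k + 1 : ℕ) = (n + 1) * n.choose k := by
      exact_mod_cast (Nat.add_one_mul_choose_eq n k).symm
    rw [truncBinom_succ, derivative_add, mul_add, ih, derivative_C_mul_X_pow, habsorb,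
      Nat.add_sub_cancel, hpascal]
    simp only [C_add, C_mul, C_1]
    ring

lemma eval_derivative_truncBinom_ne_zero {n k : ℕ} (hk : k ≤ n) {z : ℂ}
    (hz : (truncBinom (n + 1) k).eval z = 0) : (derivative (truncBinom (n + 1) k)).eval z ≠ 0 := by
  intro hz'
  have hcoef : (n + 1 : ℂ) * n.choose k ≠ 0 :=
    mul_ne_zero (Nat.cast_add_one_ne_zero n) (Nat.cast_ne_zero.mpr (Nat.choose_pos hk).ne')
  have hzk : (n + 1 : ℂ) * n.choose k * z ^ k = 0 := by
    have h := congrArg (eval z) (X_add_one_mul_derivative_truncBinom n k)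
    simp only [eval_mul, eval_add, eval_sub, eval_X, eval_one, eval_C, eval_pow, hz, hz'] at h
    linear_combination h
  have hz0 : z = 0 := pow_eq_zero_iff'.mp ((mul_eq_zero.mp hzk).resolve_left hcoef) |>.1
  simp [hz0, eval_zero_truncBinom] at hz

/-- For `k < d`, the truncated binomial `P_{k;d}` has no multiple roots: it has no common
root with its derivative in `ℂ`, equivalently it is squarefree. -/
theorem truncBinom_no_multiple_roots (k d : ℕ) (hkd : k < d) :
    (∀ z : ℂ, (truncBinom d k).eval z = 0 →
      ((truncBinom d k).derivative).eval z ≠ 0) ∧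
    Squarefree (truncBinom d k) := by
  obtain ⟨n, rfl⟩ : ∃ n, d = n + 1 := ⟨d - 1, by omega⟩
  have hroots (z : ℂ) := eval_derivative_truncBinom_ne_zero (Nat.lt_succ_iff.mp hkd) (z := z)
  exact ⟨hroots, (separable_of_eval_derivative_ne_zero hroots).squarefree⟩
end

section
/- Let N ≥ 1 and let 0 ≤ m_1 < m_2 < … < m_N < d be natural numbers. Then there exists a nonzero constant c ∈ ℂ such that the Wronskian of the N+1 polynomials P_{m_1;d}, …, P_{m_N;d}, (x+1)^d equals c · x^{m_1+⋯+m_N − N(N−1)/2} · (x+1)^{d−N}. (Note that m_1+⋯+m_N − N(N−1)/2 ≥ 0 since m_i ≥ i−1 for each i.) -/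
/-!
The operator `L f = (X + 1) f' - d f` kills `(X + 1)^d` and sends `P_{k;d}` to the monomial
`(k - d) (d choose k) X^k`. Since `D^j (L f) = (X + 1) D^{j+1} f + (j - d) D^j f`, right
multiplication of the Wronskian matrix by an upper triangular matrix of determinant `(X + 1)^N`
replaces the columns `D^{j+1} f` by `D^j (L f)`. The last row becomes `((X + 1)^d, 0, …, 0)`, so
expanding along it reduces the Wronskian to that of the monomials `X^{m_i}`, which is
`X^{∑ m_i - N(N-1)/2}` times a Vandermonde-type determinant of descending factorials.
-/

open Polynomial

/-- The Wronskian of `n` polynomials: the determinant of the `n × n` matrix whose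
`(i,j)` entry is the `j`-th derivative of `f i` (`0 ≤ j ≤ n-1`). -/
noncomputable def polyWronskian {n : ℕ} (f : Fin n → Polynomial ℂ) : Polynomial ℂ :=
  Matrix.det (Matrix.of fun i j : Fin n => Polynomial.derivative^[(j : ℕ)] (f i))

noncomputable def eulerOp (b : ℂ) (f : ℂ[X]) : ℂ[X] :=
  (X + 1) * derivative f - C b * f

lemma eulerOp_X_add_one_pow (d : ℕ) : eulerOp d ((X + 1) ^ d) = 0 := by
  cases d with
  | zero => simp [eulerOp]
  | succ d =>
    rw [eulerOp, derivative_pow]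
    simp only [derivative_X, derivative_one, add_zero, mul_one,
      Nat.add_sub_cancel, Nat.cast_add, Nat.cast_one, map_add, C_1, C_eq_natCast]
    ring

lemma cast_succ_mul_choose_succ (d k : ℕ) :
    ((k + 1 : ℕ) : ℂ) * d.choose (k + 1) = ((d : ℂ) - k) * d.choose k := by
  rcases lt_trichotomy k d with hk | rfl | hk
  · rw [← Nat.cast_sub hk.le, ← Nat.cast_mul, ← Nat.cast_mul, mul_comm,
      Nat.choose_succ_right_eq, mul_comm]
  · simp
  · simp [Nat.choose_eq_zero_of_lt hk, Nat.choose_eq_zero_of_lt (hk.trans (Nat.lt_succ_self k))]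

lemma eulerOp_truncBinom (d k : ℕ) :
    eulerOp d (truncBinom d k) = C (((k : ℂ) - d) * d.choose k) * X ^ k := by
  induction k with
  | zero => simp [eulerOp, truncBinom]
  | succ k ih =>
    have hsplit :
        truncBinom d (k + 1) = truncBinom d k + C (d.choose (k + 1) : ℂ) * X ^ (k + 1) :=
      Finset.sum_range_succ _ _
    have hchoose := congrArg C (cast_succ_mul_choose_succ d k)
    rw [eulerOp] at ih ⊢
    rw [hsplit, derivative_add, derivative_C_mul, derivative_X_pow, Nat.add_sub_cancel]
    simp only [map_mul, map_sub, map_natCast] at ih hchoose ⊢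
    push_cast at ih hchoose ⊢
    linear_combination ih + X ^ k * hchoose

lemma iterate_derivative_X_add_one_mul {R : Type*} [CommRing R] (n : ℕ) (f : R[X]) :
    derivative^[n + 1] ((X + 1) * f) =
      (X + 1) * derivative^[n + 1] f + ((n : R[X]) + 1) * derivative^[n] f := by
  induction n generalizing f with
  | zero => simp [derivative_mul, add_comm]
  | succ n ih =>
    rw [Function.iterate_succ_apply, derivative_mul, derivative_add, derivative_X, derivative_one,
      add_zero, one_mul, iterate_map_add, ih, ← Function.iterate_succ_apply,
      ← Function.iterate_succ_apply]
    push_cast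
    ring

lemma iterate_derivative_eulerOp (b : ℂ) (n : ℕ) (f : ℂ[X]) :
    derivative^[n] (eulerOp b f) =
      (X + 1) * derivative^[n + 1] f + C (n - b) * derivative^[n] f := by
  cases n with
  | zero => simp [eulerOp, sub_eq_add_neg]
  | succ n =>
    rw [eulerOp, iterate_derivative_sub, iterate_derivative_X_add_one_mul, iterate_derivative_C_mul,
      ← Function.iterate_succ_apply, ← Function.iterate_succ_apply]
    simp only [map_sub, map_natCast]
    push_cast
    ring

lemma X_pow_mul_iterate_derivative_X_pow {R : Type*} [CommSemiring R] (m j : ℕ) :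
    X ^ j * derivative^[j] (X ^ m : R[X]) = C (m.descFactorial j : R) * X ^ m := by
  rw [iterate_derivative_X_pow_eq_C_mul, mul_left_comm, ← pow_add]
  rcases le_or_gt j m with h | h
  · rw [Nat.add_sub_cancel' h]
  · simp [Nat.descFactorial_eq_zero_iff_lt.mpr h]

lemma det_descFactorial_ne_zero {n : ℕ} {m : Fin n → ℕ} (hm : Function.Injective m) :
    (Matrix.of fun i j : Fin n => ((m i).descFactorial j : ℂ)).det ≠ 0 := by
  simp_rw [← descPochhammer_eval_eq_descFactorial ℂ]
  rw [← Matrix.det_eval_matrixOfPolynomials_eq_det_vandermonde _ _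
    (fun j => descPochhammer_natDegree ℂ j) (fun j => monic_descPochhammer ℂ j)]
  exact Matrix.det_vandermonde_ne_zero_iff.mpr (Nat.cast_injective.comp hm)

lemma val_le_of_strictMono {n : ℕ} {m : Fin n → ℕ} (hm : StrictMono m) (i : Fin n) :
    (i : ℕ) ≤ m i := by
  obtain ⟨i, hi⟩ := i
  induction i with
  | zero => exact Nat.zero_le _
  | succ k ih => exact (ih (by omega)).trans_lt (hm (Fin.mk_lt_mk.mpr k.lt_succ_self))

lemma polyWronskian_C_mul {n : ℕ} (c : Fin n → ℂ) (p : Fin n → ℂ[X]) :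
    polyWronskian (fun i => C (c i) * p i) = C (∏ i, c i) * polyWronskian p := by
  simp only [polyWronskian, iterate_derivative_C_mul]
  rw [map_prod]
  exact Matrix.det_mul_column (fun i => C (c i)) _

lemma polyWronskian_X_pow_mul {n : ℕ} (m : Fin n → ℕ) :
    polyWronskian (fun i => X ^ m i) * X ^ (∑ j : Fin n, (j : ℕ)) =
      C (Matrix.of fun i j : Fin n => ((m i).descFactorial j : ℂ)).det * X ^ (∑ i, m i) := by
  rw [polyWronskian, mul_comm, ← Finset.prod_pow_eq_pow_sum, ← Matrix.det_mul_row]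
  simp only [Matrix.of_apply, X_pow_mul_iterate_derivative_X_pow]
  rw [← Finset.prod_pow_eq_pow_sum, RingHom.map_det, mul_comm, ← Matrix.det_mul_column]
  congr 1
  ext i j
  simp [mul_comm]

lemma polyWronskian_X_pow {n : ℕ} {m : Fin n → ℕ} (hm : StrictMono m) :
    ∃ c : ℂ, c ≠ 0 ∧
      polyWronskian (fun i => X ^ m i) = C c * X ^ ((∑ i, m i) - n * (n - 1) / 2) := by
  have hsum : ∑ j : Fin n, (j : ℕ) = n * (n - 1) / 2 := by
    rw [Fin.sum_univ_eq_sum_range (fun j => j), Finset.sum_range_id]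
  have hle : n * (n - 1) / 2 ≤ ∑ i, m i :=
    hsum ▸ Finset.sum_le_sum fun i _ => val_le_of_strictMono hm i
  refine ⟨_, det_descFactorial_ne_zero hm.injective, ?_⟩
  apply mul_right_cancel₀ (pow_ne_zero (n * (n - 1) / 2) (X_ne_zero (R := ℂ)))
  rw [← hsum, polyWronskian_X_pow_mul, mul_assoc, ← pow_add, hsum, Nat.sub_add_cancel hle]

lemma polyWronskian_mul_X_add_one_pow {n : ℕ} (b : ℂ) (f : Fin (n + 1) → ℂ[X]) :
    polyWronskian f * (X + 1) ^ n =
      (Matrix.of fun i =>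
        Fin.cons (f i) fun j : Fin n => derivative^[j] (eulerOp b (f i))).det := by
  -- Right multiplication by `T` replaces column `j + 1` by
  -- `(X + 1) D^{j+1} f + (j - b) D^j f = D^j (eulerOp b f)`.
  let T : Matrix (Fin (n + 1)) (Fin (n + 1)) ℂ[X] :=
    Matrix.diagonal (Fin.cons 1 fun _ => X + 1 : Fin (n + 1) → ℂ[X]) +
      Matrix.of fun k j : Fin (n + 1) => if (k : ℕ) + 1 = j then C (k - b) else 0
  have hT : T.IsUpperTriangular := by
    intro k j hjk
    have hjk' : (j : ℕ) < k := hjk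
    simp only [T, Matrix.add_apply, Matrix.of_apply,
      Matrix.diagonal_apply_ne _ (fun h : k = j => by simp [h] at hjk')]
    rw [if_neg (by omega), add_zero]
  have hdetT : T.det = (X + 1) ^ n := by
    rw [Matrix.det_of_isUpperTriangular hT, Fin.prod_univ_succ]
    simp [T]
  have hMT : (Matrix.of fun i j : Fin (n + 1) => derivative^[j] (f i)) * T =
      Matrix.of fun i => Fin.cons (f i) fun j : Fin n => derivative^[j] (eulerOp b (f i)) := by
    refine Matrix.ext fun i j => ?_
    rw [Matrix.mul_add, Matrix.add_apply, Matrix.mul_diagonal, Matrix.mul_apply]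
    refine Fin.cases ?_ (fun j => ?_) j
    · rw [Finset.sum_eq_zero fun k _ => by simp]
      simp
    · rw [Finset.sum_eq_single j.castSucc (fun k _ hk => by simp [Fin.ext_iff] at hk ⊢; omega)
        (by simp)]
      simp [iterate_derivative_eulerOp, mul_comm]
  rw [polyWronskian, ← hdetT, ← Matrix.det_mul, hMT]

lemma polyWronskian_snoc_mul_X_add_one_pow {n : ℕ} (b : ℂ) (g : Fin n → ℂ[X]) {h : ℂ[X]}
    (hh : eulerOp b h = 0) :
    polyWronskian (Fin.snoc g h) * (X + 1) ^ n =
      (-1) ^ n * h * polyWronskian (fun i => eulerOp b (g i)) := by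
  rw [polyWronskian_mul_X_add_one_pow b, Matrix.det_succ_row _ (Fin.last n), Fin.sum_univ_succ,
    Finset.sum_eq_zero fun j _ => by simp [hh, iterate_map_zero]]
  simp [polyWronskian, Matrix.submatrix]

theorem wronskian_truncBinoms_general (N d : ℕ)
    (m : Fin N → ℕ) (hmono : StrictMono m) (hlt : ∀ i, m i < d) :
    ∃ c : ℂ, c ≠ 0 ∧
      polyWronskian
          (Fin.snoc (fun i : Fin N => truncBinom d (m i))
            ((Polynomial.X + 1) ^ d : Polynomial ℂ))
        = Polynomial.C c * Polynomial.X ^ ((∑ i, m i) - N * (N - 1) / 2)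
            * (Polynomial.X + 1) ^ (d - N) := by
  have hNd : N ≤ d := by
    cases N with
    | zero => exact Nat.zero_le d
    | succ N => exact (val_le_of_strictMono hmono (Fin.last N)).trans_lt (hlt _)
  obtain ⟨V, hV, hW⟩ := polyWronskian_X_pow hmono
  have key := polyWronskian_snoc_mul_X_add_one_pow (d : ℂ) (fun i => truncBinom d (m i))
    (eulerOp_X_add_one_pow d)
  simp only [eulerOp_truncBinom, polyWronskian_C_mul, hW] at key
  refine ⟨(-1) ^ N * (∏ i, ((m i : ℂ) - d) * d.choose (m i)) * V, ?_, ?_⟩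
  · refine mul_ne_zero (mul_ne_zero (pow_ne_zero _ (neg_ne_zero.mpr one_ne_zero))
      (Finset.prod_ne_zero_iff.mpr fun i _ => mul_ne_zero ?_ ?_)) hV
    · exact sub_ne_zero.mpr (Nat.cast_injective.ne (hlt i).ne)
    · exact Nat.cast_ne_zero.mpr (Nat.choose_pos (hlt i).le).ne'
  · apply mul_right_cancel₀ (pow_ne_zero N (X_add_C_ne_zero (1 : ℂ)))
    rw [C_1, key, ← pow_sub_mul_pow _ hNd]
    simp only [map_mul, map_pow, map_neg, map_one]
    ring

/-- For `0 ≤ m_1 < … < m_N < d`, the Wronskian of the `N+1` polynomials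
`P_{m_1;d}, …, P_{m_N;d}, (x+1)^d` equals
`c · x^{m_1+⋯+m_N − N(N−1)/2} · (x+1)^{d−N}` for some nonzero constant `c`. -/
theorem wronskian_truncBinoms (N d : ℕ) (hN : 1 ≤ N)
    (m : Fin N → ℕ) (hmono : StrictMono m) (hlt : ∀ i, m i < d) :
    ∃ c : ℂ, c ≠ 0 ∧
      polyWronskian
          (Fin.snoc (fun i : Fin N => truncBinom d (m i))
            ((Polynomial.X + 1) ^ d : Polynomial ℂ))
        = Polynomial.C c * Polynomial.X ^ ((∑ i, m i) - N * (N - 1) / 2)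
            * (Polynomial.X + 1) ^ (d - N) :=
  wronskian_truncBinoms_general N d m hmono hlt
end

section
/- Let N ≥ 1 and let 0 ≤ m_1 < m_2 < … < m_N < d be natural numbers, and let V ⊆ ℂ[x] be the ℂ-linear span of the N+1 polynomials P_{m_1;d}, …, P_{m_N;d}, (x+1)^d. Then V has dimension N+1, and the set of root multiplicities at 0 of the nonzero elements of V is exactly {0, m_1+1, m_2+1, …, m_N+1}. -/
/-!
Replacing each `P_{m_i;d}` by `(x+1)^d - P_{m_i;d}` does not change the span. The new generator
`(x+1)^d - P_{m_i;d} = ∑_{j > m_i} (d choose j) x^j` vanishes at `0` to order exactly `m_i + 1`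
(as `m_i < d`), while `(x+1)^d` does not vanish at `0`. Nonzero polynomials with pairwise distinct
orders at `0` behave like a triangular basis: in a nontrivial linear combination the term of
least order cannot cancel, so they are linearly independent and every nonzero element of their
span has one of their orders.
-/

open Polynomial

open Function

section TrailingDegree

variable {R ι : Type*} [Ring R] [NoZeroDivisors R] [Fintype ι] {f : ι → R[X]}

theorem exists_natTrailingDegree_sum_smul_eq (hf : ∀ i, f i ≠ 0)
    (hinj : Injective (natTrailingDegree ∘ f)) {c : ι → R} (hc : c ≠ 0) :
    ∃ i, ∑ j, c j • f j ≠ 0 ∧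
      (∑ j, c j • f j).natTrailingDegree = (f i).natTrailingDegree := by
  classical
  obtain ⟨i, hci, hmin⟩ := (Finset.univ.filter (c · ≠ 0)).exists_min_image
    (natTrailingDegree ∘ f) (by simpa [Finset.Nonempty, funext_iff] using hc)
  simp only [Finset.mem_filter, Finset.mem_univ, true_and, comp_apply] at hci hmin
  set k := (f i).natTrailingDegree
  have hcoeff_lt : ∀ j, ∀ n < k, (c j • f j).coeff n = 0 := by
    intro j n hn
    by_cases hcj : c j = 0
    · simp [hcj]
    · rw [coeff_smul, coeff_eq_zero_of_lt_natTrailingDegree (hn.trans_le (hmin j hcj)),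
        smul_zero]
  have hcoeff_k : (∑ j, c j • f j).coeff k = c i * (f i).coeff k := by
    rw [finsetSum_coeff, Finset.sum_eq_single i _ (by simp), coeff_smul, smul_eq_mul]
    intro j _ hji
    by_cases hcj : c j = 0
    · simp [hcj]
    · have hk : k < (f j).natTrailingDegree :=
        (hmin j hcj).lt_of_ne fun h => hji (hinj h.symm)
      rw [coeff_smul, coeff_eq_zero_of_lt_natTrailingDegree hk, smul_zero]
  have hk_ne : (∑ j, c j • f j).coeff k ≠ 0 := by
    rw [hcoeff_k]
    exact mul_ne_zero hci (coeff_natTrailingDegree_ne_zero.2 (hf i))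
  have hsum : ∑ j, c j • f j ≠ 0 := fun h => hk_ne (by rw [h, coeff_zero])
  refine ⟨i, hsum, (natTrailingDegree_le_of_ne_zero hk_ne).antisymm ?_⟩
  exact le_natTrailingDegree hsum fun n hn => by
    rw [finsetSum_coeff]
    exact Finset.sum_eq_zero fun j _ => hcoeff_lt j n hn

theorem linearIndependent_of_injective_natTrailingDegree (hf : ∀ i, f i ≠ 0)
    (hinj : Injective (natTrailingDegree ∘ f)) : LinearIndependent R f := by
  rw [Fintype.linearIndependent_iff]
  intro c hc
  by_contra! hc0
  obtain ⟨_, hsum, -⟩ := exists_natTrailingDegree_sum_smul_eq hf hinj (Function.ne_iff.2 hc0)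
  exact hsum hc

theorem setOf_natTrailingDegree_mem_span_eq (hf : ∀ i, f i ≠ 0)
    (hinj : Injective (natTrailingDegree ∘ f)) :
    {k | ∃ p ∈ Submodule.span R (Set.range f), p ≠ 0 ∧ p.natTrailingDegree = k} =
      Set.range (natTrailingDegree ∘ f) := by
  ext k
  constructor
  · rintro ⟨p, hp, hp0, rfl⟩
    obtain ⟨c, rfl⟩ := (Submodule.mem_span_range_iff_exists_fun R).1 hp
    have hc : c ≠ 0 := by
      rintro rfl
      simp at hp0
    obtain ⟨i, -, hi⟩ := exists_natTrailingDegree_sum_smul_eq hf hinj hc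
    exact ⟨i, hi.symm⟩
  · rintro ⟨i, rfl⟩
    exact ⟨f i, Submodule.subset_span ⟨i, rfl⟩, hf i, rfl⟩

end TrailingDegree

theorem Submodule.span_range_snoc_sub {R M : Type*} [Ring R] [AddCommGroup M] [Module R M]
    {n : ℕ} (v : Fin n → M) (w : M) :
    span R (Set.range (Fin.snoc (fun i => w - v i) w)) = span R (Set.range (Fin.snoc v w)) := by
  have hle : ∀ v : Fin n → M,
      span R (Set.range (Fin.snoc (fun i => w - v i) w)) ≤ span R (Set.range (Fin.snoc v w)) := by
    intro v
    have hw : w ∈ span R (Set.range (Fin.snoc v w)) := subset_span (by simp)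
    rw [span_le, Fin.range_snoc, Set.insert_subset_iff, Set.range_subset_iff]
    exact ⟨hw, fun i => sub_mem hw (subset_span (by simp))⟩
  refine (hle v).antisymm ?_
  simpa only [sub_sub_cancel] using hle fun i => w - v i

section TruncBinom

theorem coeff_truncBinom (d k j : ℕ) :
    (truncBinom d k).coeff j = if j ≤ k then (d.choose j : ℂ) else 0 := by
  simp only [truncBinom, finsetSum_coeff, coeff_C_mul, coeff_X_pow, mul_ite, mul_one,
    mul_zero, Finset.sum_ite_eq, Finset.mem_range, Nat.lt_succ_iff]

theorem coeff_X_add_one_pow_sub_truncBinom (d k j : ℕ) :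
    ((X + 1) ^ d - truncBinom d k).coeff j = if j ≤ k then 0 else (d.choose j : ℂ) := by
  rw [coeff_sub, coeff_X_add_one_pow, coeff_truncBinom]
  split_ifs <;> simp

variable {d k : ℕ}

theorem coeff_X_add_one_pow_sub_truncBinom_succ_ne_zero (h : k < d) :
    ((X + 1) ^ d - truncBinom d k).coeff (k + 1) ≠ 0 := by
  rw [coeff_X_add_one_pow_sub_truncBinom, if_neg (by omega)]
  exact_mod_cast (Nat.choose_pos h).ne'

theorem X_add_one_pow_sub_truncBinom_ne_zero (h : k < d) : (X + 1) ^ d - truncBinom d k ≠ 0 :=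
  fun h0 => coeff_X_add_one_pow_sub_truncBinom_succ_ne_zero h (by rw [h0, coeff_zero])

theorem natTrailingDegree_X_add_one_pow_sub_truncBinom (h : k < d) :
    ((X + 1) ^ d - truncBinom d k).natTrailingDegree = k + 1 := by
  refine (natTrailingDegree_le_of_ne_zero
    (coeff_X_add_one_pow_sub_truncBinom_succ_ne_zero h)).antisymm ?_
  refine le_natTrailingDegree (X_add_one_pow_sub_truncBinom_ne_zero h) fun j hj => ?_
  rw [coeff_X_add_one_pow_sub_truncBinom, if_pos (Nat.lt_succ_iff.1 hj)]

end TruncBinom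

theorem span_truncBinoms_orders_at_zero_general (N d : ℕ)
    (m : Fin N → ℕ) (hmono : StrictMono m) (hlt : ∀ i, m i < d)
    (V : Submodule ℂ (Polynomial ℂ))
    (hV : V = Submodule.span ℂ (Set.range
      (Fin.snoc (fun i : Fin N => truncBinom d (m i))
        ((Polynomial.X + 1) ^ d : Polynomial ℂ)))) :
    Module.finrank ℂ V = N + 1 ∧
    {k : ℕ | ∃ f ∈ V, f ≠ 0 ∧ Polynomial.rootMultiplicity 0 f = k}
      = insert 0 (Set.range fun i : Fin N => m i + 1) := by
  set G : Fin (N + 1) → ℂ[X] :=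
    Fin.snoc (fun i => (X + 1) ^ d - truncBinom d (m i)) ((X + 1) ^ d)
  have hVG : V = Submodule.span ℂ (Set.range G) :=
    hV.trans (Submodule.span_range_snoc_sub _ _).symm
  have hG0 : ∀ i, G i ≠ 0 :=
    Fin.lastCases (by simpa [G] using pow_ne_zero d (X_add_C_ne_zero (1 : ℂ)))
      fun i => by simpa [G] using X_add_one_pow_sub_truncBinom_ne_zero (hlt i)
  have hdeg : natTrailingDegree ∘ G = Fin.snoc (fun i => m i + 1) 0 := by
    rw [Fin.comp_snoc]
    congr 1
    · exact funext fun i => natTrailingDegree_X_add_one_pow_sub_truncBinom (hlt i)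
    · simp [coeff_X_add_one_pow]
  have hinj : Injective (natTrailingDegree ∘ G) := by
    rw [hdeg]
    exact Fin.snoc_injective_of_injective ((add_left_injective 1).comp hmono.injective) (by simp)
  subst hVG
  refine ⟨?_, ?_⟩
  · rw [finrank_span_eq_card (linearIndependent_of_injective_natTrailingDegree hG0 hinj),
      Fintype.card_fin]
  · simp_rw [rootMultiplicity_eq_natTrailingDegree']
    rw [setOf_natTrailingDegree_mem_span_eq hG0 hinj, hdeg, Fin.range_snoc]

/-- Let `V` be the span of `P_{m_1;d}, …, P_{m_N;d}, (x+1)^d` where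
`0 ≤ m_1 < … < m_N < d`.  Then `V` has dimension `N+1` and the set of root
multiplicities at `0` of nonzero elements of `V` is exactly
`{0, m_1+1, …, m_N+1}`. -/
theorem span_truncBinoms_orders_at_zero (N d : ℕ) (hN : 1 ≤ N)
    (m : Fin N → ℕ) (hmono : StrictMono m) (hlt : ∀ i, m i < d)
    (V : Submodule ℂ (Polynomial ℂ))
    (hV : V = Submodule.span ℂ (Set.range
      (Fin.snoc (fun i : Fin N => truncBinom d (m i))
        ((Polynomial.X + 1) ^ d : Polynomial ℂ)))) :
    Module.finrank ℂ V = N + 1 ∧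
    {k : ℕ | ∃ f ∈ V, f ≠ 0 ∧ Polynomial.rootMultiplicity 0 f = k}
      = insert 0 (Set.range fun i : Fin N => m i + 1) :=
  span_truncBinoms_orders_at_zero_general N d m hmono hlt V hV
end

section
/- Let V be an (N+1)-dimensional ℂ-linear subspace of the polynomial ring ℂ[x] and let ξ ∈ ℂ. Then the set { ord_ξ f : f ∈ V, f ≠ 0 } of root multiplicities at ξ of nonzero elements of V has exactly N+1 elements. -/
open Polynomial

lemma aux_ntd (N : ℕ) : ∀ (W : Submodule ℂ (Polynomial ℂ)), FiniteDimensional ℂ W →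
    Module.finrank ℂ W = N →
    ({k : ℕ | ∃ g ∈ W, g ≠ 0 ∧ g.natTrailingDegree = k}.Finite ∧
     {k : ℕ | ∃ g ∈ W, g ≠ 0 ∧ g.natTrailingDegree = k}.ncard = N) := by
  induction N with
  | zero =>
    intro W _ hW
    have hbot : W = ⊥ := Submodule.finrank_eq_zero.mp hW
    have : {k : ℕ | ∃ g ∈ W, g ≠ 0 ∧ g.natTrailingDegree = k} = ∅ := by
      ext k
      simp only [Set.mem_setOf_eq, Set.mem_empty_iff_false, iff_false]
      rintro ⟨g, hg, hg0, -⟩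
      rw [hbot, Submodule.mem_bot] at hg
      exact hg0 hg
    rw [this]
    exact ⟨Set.finite_empty, Set.ncard_empty _⟩
  | succ N ih =>
    intro W _ hW
    set S := {k : ℕ | ∃ g ∈ W, g ≠ 0 ∧ g.natTrailingDegree = k} with hS
    have hWne : W ≠ ⊥ := by
      intro h
      rw [h, finrank_bot] at hW
      omega
    have hSne : S.Nonempty := by
      obtain ⟨g, hg, hg0⟩ := Submodule.exists_mem_ne_zero_of_ne_bot hWne
      exact ⟨g.natTrailingDegree, g, hg, hg0, rfl⟩
    set k0 := sInf S with hk0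
    obtain ⟨g0, hg0W, hg00, hg0d⟩ := Nat.sInf_mem hSne
    set W' := W ⊓ LinearMap.ker (lcoeff ℂ k0) with hW'
    have hle : W' ≤ W := inf_le_left
    haveI : FiniteDimensional ℂ W' := Submodule.finiteDimensional_of_le hle
    -- the functional
    set φ : W →ₗ[ℂ] ℂ := (lcoeff ℂ k0).comp W.subtype with hφ
    have hker : LinearMap.ker φ = Submodule.comap W.subtype W' := by
      ext x
      simp [hφ, hW', x.2]
    have hφne : φ ≠ 0 := by
      intro h
      have hc : g0.coeff k0 = 0 := by
        have := congrFun (congrArg DFunLike.coe h) ⟨g0, hg0W⟩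
        simpa [hφ] using this
      exact hg00 (trailingCoeff_eq_zero.mp (by rw [trailingCoeff, hg0d]; exact hc))
    have hrange : Module.finrank ℂ (LinearMap.range φ) = 1 := by
      have h1 : Module.finrank ℂ (LinearMap.range φ) ≤ 1 := by
        simpa using Submodule.finrank_le (LinearMap.range φ)
      have h2 : 0 < Module.finrank ℂ (LinearMap.range φ) := by
        rw [Module.finrank_pos_iff]
        exact Submodule.nontrivial_iff_ne_bot.mpr (LinearMap.range_eq_bot.not.mpr hφne)
      omega
    have hkerrank : Module.finrank ℂ (LinearMap.ker φ) = N := by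
      have := LinearMap.finrank_range_add_finrank_ker φ
      rw [hW, hrange] at this
      omega
    have hW'rank : Module.finrank ℂ W' = N := by
      rw [← hkerrank, hker]
      exact (LinearEquiv.finrank_eq (Submodule.comapSubtypeEquivOfLe hle)).symm
    obtain ⟨hfin', hcard'⟩ := ih W' inferInstance hW'rank
    have hSet : {k : ℕ | ∃ g ∈ W', g ≠ 0 ∧ g.natTrailingDegree = k} = S \ {k0} := by
      ext k
      constructor
      · rintro ⟨g, hg, hgne, rfl⟩
        refine ⟨⟨g, hle hg, hgne, rfl⟩, ?_⟩
        intro h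
        simp only [Set.mem_singleton_iff] at h
        have hc : g.coeff k0 = 0 := by
          simpa [LinearMap.mem_ker] using (hg : g ∈ W ⊓ LinearMap.ker (lcoeff ℂ k0)).2
        exact hgne (trailingCoeff_eq_zero.mp (by rw [trailingCoeff, h]; exact hc))
      · rintro ⟨⟨g, hgW, hgne, rfl⟩, hne⟩
        simp only [Set.mem_singleton_iff] at hne
        have hlt : k0 < g.natTrailingDegree :=
          lt_of_le_of_ne (Nat.sInf_le ⟨g, hgW, hgne, rfl⟩) (Ne.symm hne)
        refine ⟨g, ⟨hgW, ?_⟩, hgne, rfl⟩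
        simp [LinearMap.mem_ker, coeff_eq_zero_of_lt_natTrailingDegree hlt]
    have hk0notin : k0 ∉ S \ {k0} := by simp
    have : S = insert k0 (S \ {k0}) := by
      rw [Set.insert_diff_singleton, Set.insert_eq_self.mpr (Nat.sInf_mem hSne)]
    rw [hSet] at hfin' hcard'
    constructor
    · rw [this]; exact hfin'.insert k0
    · rw [this, Set.ncard_insert_of_notMem hk0notin hfin', hcard']

/-- If `V` is an `(N+1)`-dimensional subspace of `ℂ[x]` and `ξ ∈ ℂ`, then the set of
root multiplicities at `ξ` of nonzero elements of `V` has exactly `N+1` elements. -/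
theorem card_orders_at_point (N : ℕ) (V : Submodule ℂ (Polynomial ℂ))
    (hV : Module.finrank ℂ V = N + 1) (ξ : ℂ) :
    {k : ℕ | ∃ f ∈ V, f ≠ 0 ∧ Polynomial.rootMultiplicity ξ f = k}.ncard = N + 1 := by
  haveI : FiniteDimensional ℂ V := FiniteDimensional.of_finrank_pos (by omega)
  set e : Polynomial ℂ ≃ₗ[ℂ] Polynomial ℂ :=
    LinearEquiv.ofLinear (taylor ξ) (taylor (-ξ))
      (by apply LinearMap.ext; intro f; simp [taylor_taylor])
      (by apply LinearMap.ext; intro f; simp [taylor_taylor]) with he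
  set W := V.map (e : Polynomial ℂ →ₗ[ℂ] Polynomial ℂ) with hWdef
  haveI : FiniteDimensional ℂ W := Module.Finite.map V _
  have hWrank : Module.finrank ℂ W = N + 1 := by
    rw [hWdef, LinearEquiv.finrank_map_eq]; exact hV
  have hset : {k : ℕ | ∃ f ∈ V, f ≠ 0 ∧ Polynomial.rootMultiplicity ξ f = k} =
      {k : ℕ | ∃ g ∈ W, g ≠ 0 ∧ g.natTrailingDegree = k} := by
    ext k
    constructor
    · rintro ⟨f, hf, hf0, rfl⟩
      refine ⟨e f, Submodule.mem_map_of_mem hf, by simpa using hf0, ?_⟩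
      rw [rootMultiplicity_eq_natTrailingDegree]
      simp [he, LinearEquiv.ofLinear_apply, taylor_apply]
    · rintro ⟨g, hg, hg0, rfl⟩
      obtain ⟨f, hf, rfl⟩ := hg
      refine ⟨f, hf, by simpa using hg0, ?_⟩
      rw [rootMultiplicity_eq_natTrailingDegree]
      congr 1
  rw [hset]
  exact (aux_ntd (N + 1) W inferInstance hWrank).2
end

section
/- Let V be an (N+1)-dimensional ℂ-linear subspace of ℂ[x] with basis f_1, …, f_{N+1}, let ξ ∈ ℂ, and let ρ_0 < ρ_1 < … < ρ_N be the N+1 distinct root multiplicities at ξ attained by the nonzero elements of V. Then the Wronskian of f_1, …, f_{N+1} is a nonzero polynomial whose root multiplicity at ξ equals ρ_0 + ρ_1 + ⋯ + ρ_N − N(N+1)/2. -/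
open Polynomial

open Finset

lemma X_pow_dvd_iterate_derivative (p : Polynomial ℂ) (r j : ℕ) (h : X ^ r ∣ p) :
    X ^ (r - j) ∣ Polynomial.derivative^[j] p := by
  rw [X_pow_dvd_iff] at h ⊢
  intro d hd
  rw [Polynomial.coeff_iterate_derivative, h (d + j) (by omega), smul_zero]

lemma coeff_prod_of_dvd {n : ℕ} (p : Fin n → Polynomial ℂ) (s : Fin n → ℕ)
    (h : ∀ i, X ^ (s i) ∣ p i) :
    (∀ d < ∑ i, s i, (∏ i, p i).coeff d = 0) ∧
      (∏ i, p i).coeff (∑ i, s i) = ∏ i, (p i).coeff (s i) := by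
  choose q hq using h
  have hprod : ∏ i, p i = X ^ (∑ i, s i) * ∏ i, q i := by
    rw [← Finset.prod_pow_eq_pow_sum, ← Finset.prod_mul_distrib]
    exact Finset.prod_congr rfl fun i _ => hq i
  constructor
  · intro d hd
    exact X_pow_dvd_iff.mp ⟨∏ i, q i, hprod⟩ d hd
  · have h1 : (∏ i, p i).coeff (∑ i, s i) = (∏ i, q i).coeff 0 := by
      rw [hprod]; simpa using Polynomial.coeff_X_pow_mul (∏ i, q i) (∑ i, s i) 0
    have h2 : ∀ i, (p i).coeff (s i) = (q i).coeff 0 := fun i => by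
      rw [hq i]; simpa using Polynomial.coeff_X_pow_mul (q i) (s i) 0
    simp only [h1, h2, Polynomial.coeff_zero_eq_eval_zero]
    rw [Polynomial.eval_prod]


lemma core0 (N : ℕ) (g : Fin (N + 1) → Polynomial ℂ) (ρ : Fin (N + 1) → ℕ)
    (hρ : StrictMono ρ) (hg : ∀ i, g i ≠ 0)
    (hmult : ∀ i, Polynomial.rootMultiplicity 0 (g i) = ρ i) :
    polyWronskian g ≠ 0 ∧
      Polynomial.rootMultiplicity 0 (polyWronskian g) = (∑ i, ρ i) - N * (N + 1) / 2 := by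
  classical
  set T : ℕ := ∑ i : Fin (N + 1), (i : ℕ) with hT
  have hle : ∀ i : Fin (N + 1), (i : ℕ) ≤ ρ i := by
    intro i
    obtain ⟨k, hk⟩ := i
    induction k with
    | zero => exact Nat.zero_le _
    | succ k ih =>
      have h1 : k < N + 1 := by omega
      have h2 : ρ ⟨k, h1⟩ < ρ ⟨k + 1, hk⟩ := hρ (by simp [Fin.lt_def])
      have h3 := ih h1
      simp only [Fin.val_mk] at h2 h3 ⊢
      omega
  have hTle : T ≤ ∑ i, ρ i := Finset.sum_le_sum fun i _ => hle i
  have hTval : T = N * (N + 1) / 2 := by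
    have h2 : T * 2 = (N + 1) * N := by
      rw [hT, Fin.sum_univ_eq_sum_range (fun i => i) (N + 1)]
      exact Finset.sum_range_id_mul_two (N + 1)
    have h3 : (N + 1) * N = N * (N + 1) := Nat.mul_comm _ _
    omega
  set m : ℕ := (∑ i, ρ i) - T with hm
  have hmadd : T + m = ∑ i, ρ i := by omega
  set c : Fin (N + 1) → ℂ := fun i => (g i).coeff (ρ i) with hc
  have hc0 : ∀ i, c i ≠ 0 := by
    intro i
    have h1 : (g i).natTrailingDegree = ρ i := by
      rw [← Polynomial.rootMultiplicity_eq_natTrailingDegree', hmult i]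
    have := Polynomial.trailingCoeff_nonzero_iff_nonzero.mpr (hg i)
    rwa [Polynomial.trailingCoeff, h1] at this
  have hdvd : ∀ i, X ^ ρ i ∣ g i := by
    intro i
    have := Polynomial.pow_rootMultiplicity_dvd (g i) 0
    rwa [hmult i, C_0, sub_zero] at this
  -- the target determinant over ℂ
  set A : Matrix (Fin (N + 1)) (Fin (N + 1)) ℂ :=
    Matrix.of (fun i j : Fin (N + 1) => c i * ((ρ i).descFactorial (j : ℕ) : ℂ)) with hA
  -- per-permutation coefficient computation
  have perSigma : ∀ (σ : Equiv.Perm (Fin (N + 1))) (d : ℕ), d ≤ m →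
      (∏ i : Fin (N+1), Polynomial.derivative^[(i : ℕ)] (g (σ i))).coeff d
        = if d = m then ∏ i : Fin (N+1), A (σ i) i else 0 := by
    intro σ d hd
    set s : Fin (N + 1) → ℕ := fun i => ρ (σ i) - (i : ℕ) with hs
    have hdvd2 : ∀ i, X ^ (s i) ∣ Polynomial.derivative^[(i : ℕ)] (g (σ i)) :=
      fun i => X_pow_dvd_iterate_derivative _ _ _ (hdvd (σ i))
    have hsum_rho : ∑ i : Fin (N+1), ρ (σ i) = ∑ i, ρ i := Equiv.sum_comp σ ρ
    by_cases hcase : ∀ i : Fin (N + 1), (i : ℕ) ≤ ρ (σ i)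
    · have hsums : ∑ i, s i = m := by
        have : ∑ i : Fin (N+1), ((i : ℕ) + s i) = ∑ i : Fin (N+1), ρ (σ i) :=
          Finset.sum_congr rfl fun i _ => by
            have h5 := hcase i
            show (i : ℕ) + (ρ (σ i) - (i : ℕ)) = ρ (σ i)
            omega
        rw [Finset.sum_add_distrib, ← hT, hsum_rho] at this
        omega
      obtain ⟨hzero, hcoeff⟩ := coeff_prod_of_dvd _ s hdvd2
      rcases eq_or_lt_of_le hd with rfl | hlt
      · rw [if_pos rfl, ← hsums, hcoeff]
        refine Finset.prod_congr rfl fun i _ => ?_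
        have hle2 : (i : ℕ) ≤ ρ (σ i) := hcase i
        rw [Polynomial.coeff_iterate_derivative]
        have h6 : (ρ (σ i) - (i : ℕ)) + (i : ℕ) = ρ (σ i) := by omega
        show ((ρ (σ i) - (i:ℕ)) + (i:ℕ)).descFactorial (i:ℕ) • (g (σ i)).coeff ((ρ (σ i) - (i:ℕ)) + (i:ℕ)) = A (σ i) i
        rw [h6, hA]
        simp only [Matrix.of_apply, nsmul_eq_mul, hc]
        ring
      · rw [if_neg (by omega)]
        exact hzero d (by omega)
    · push_neg at hcase
      obtain ⟨i0, hi0⟩ := hcase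
      have hbig : m < ∑ i, s i := by
        have hgt : ∑ i : Fin (N+1), ρ (σ i) < ∑ i : Fin (N+1), ((i : ℕ) + s i) := by
          refine Finset.sum_lt_sum (fun i _ => ?_) ⟨i0, Finset.mem_univ _, ?_⟩
          · show ρ (σ i) ≤ (i : ℕ) + (ρ (σ i) - (i : ℕ)); omega
          · show ρ (σ i0) < (i0 : ℕ) + (ρ (σ i0) - (i0 : ℕ)); omega
        rw [Finset.sum_add_distrib, ← hT, hsum_rho] at hgt
        omega
      have hzero := (coeff_prod_of_dvd _ s hdvd2).1 d (by omega)
      rw [hzero]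
      rcases eq_or_ne d m with rfl | hne
      · rw [if_pos rfl]
        have : A (σ i0) i0 = 0 := by
          simp [hA, Nat.descFactorial_eq_zero_iff_lt.mpr hi0]
        refine (Finset.prod_eq_zero (Finset.mem_univ i0) (f := fun i => A (σ i) i) this).symm
      · rw [if_neg hne]
  -- coefficients of the Wronskian
  have hWcoeff : ∀ d ≤ m, (polyWronskian g).coeff d = if d = m then A.det else 0 := by
    intro d hd
    rw [polyWronskian, Matrix.det_apply, Matrix.det_apply, Polynomial.finset_sum_coeff]
    simp only [Polynomial.coeff_smul, Matrix.of_apply]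
    by_cases hdm : d = m
    · subst hdm
      rw [if_pos rfl]
      exact Finset.sum_congr rfl fun σ _ => by rw [perSigma σ m le_rfl, if_pos rfl]
    · rw [if_neg hdm]
      exact Finset.sum_eq_zero fun σ _ => by rw [perSigma σ d hd, if_neg hdm, smul_zero]
  -- the determinant is nonzero
  have hdet : A.det ≠ 0 := by
    have hsplit : A.det = (∏ i, c i) *
        (Matrix.of fun i j : Fin (N+1) => ((ρ i).descFactorial (j : ℕ) : ℂ)).det := by
      rw [← Matrix.det_mul_column]
      rfl
    have hvdm : (Matrix.of fun i j : Fin (N+1) => ((ρ i).descFactorial (j : ℕ) : ℂ)).det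
        = (Matrix.vandermonde fun i : Fin (N+1) => ((ρ i : ℕ) : ℂ)).det := by
      rw [Matrix.det_eval_matrixOfPolynomials_eq_det_vandermonde
        (fun i : Fin (N+1) => ((ρ i : ℕ) : ℂ)) (fun j => descPochhammer ℂ (j : ℕ))
        (fun j => descPochhammer_natDegree ℂ (j : ℕ))
        (fun j => monic_descPochhammer ℂ (j : ℕ))]
      congr 1
      ext i j
      rw [Matrix.of_apply, Matrix.of_apply, descPochhammer_eval_eq_descFactorial]
    have hvne : (Matrix.vandermonde fun i : Fin (N+1) => ((ρ i : ℕ) : ℂ)).det ≠ 0 := by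
      rw [Matrix.det_vandermonde]
      refine Finset.prod_ne_zero_iff.mpr fun i _ => Finset.prod_ne_zero_iff.mpr fun j hj => ?_
      rw [Finset.mem_Ioi] at hj
      have : ρ i < ρ j := hρ hj
      intro hcontra
      rw [sub_eq_zero] at hcontra
      exact absurd (Nat.cast_injective hcontra) (by omega)
    rw [hsplit, hvdm]
    exact mul_ne_zero (Finset.prod_ne_zero_iff.mpr fun i _ => hc0 i) hvne
  have hWm : (polyWronskian g).coeff m ≠ 0 := by
    rw [hWcoeff m le_rfl, if_pos rfl]; exact hdet
  have hWne : polyWronskian g ≠ 0 := fun h => hWm (by rw [h, Polynomial.coeff_zero])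
  refine ⟨hWne, ?_⟩
  rw [← hTval, ← hm]
  have hdvdW : X ^ m ∣ polyWronskian g := by
    rw [X_pow_dvd_iff]
    intro d hd
    rw [hWcoeff d (le_of_lt hd), if_neg (Nat.ne_of_lt hd)]
  have h1 : m ≤ Polynomial.rootMultiplicity 0 (polyWronskian g) := by
    rw [Polynomial.le_rootMultiplicity_iff hWne, C_0, sub_zero]
    exact hdvdW
  have h2 : Polynomial.rootMultiplicity 0 (polyWronskian g) ≤ m := by
    by_contra hcon
    push_neg at hcon
    have hdd : X ^ (m + 1) ∣ polyWronskian g := by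
      have h3 : m + 1 ≤ Polynomial.rootMultiplicity 0 (polyWronskian g) := hcon
      rwa [Polynomial.le_rootMultiplicity_iff hWne, C_0, sub_zero] at h3
    exact hWm (X_pow_dvd_iff.mp hdd m (by omega))
  omega

lemma taylor_derivative (ξ : ℂ) (p : Polynomial ℂ) :
    Polynomial.derivative (Polynomial.taylor ξ p)
      = Polynomial.taylor ξ (Polynomial.derivative p) := by
  simp only [Polynomial.taylor_apply, Polynomial.derivative_comp]
  simp

lemma taylor_iterate_derivative (ξ : ℂ) (p : Polynomial ℂ) (j : ℕ) :
    Polynomial.derivative^[j] (Polynomial.taylor ξ p)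
      = Polynomial.taylor ξ (Polynomial.derivative^[j] p) := by
  induction j generalizing p with
  | zero => rfl
  | succ j ih =>
    rw [Function.iterate_succ_apply, Function.iterate_succ_apply, taylor_derivative, ih]

lemma taylor_polyWronskian {n : ℕ} (ξ : ℂ) (g : Fin n → Polynomial ℂ) :
    polyWronskian (fun i => Polynomial.taylor ξ (g i))
      = Polynomial.taylor ξ (polyWronskian g) := by
  have h0 : Polynomial.taylor ξ (polyWronskian g)
      = ((Matrix.of fun i j : Fin n => Polynomial.derivative^[(j : ℕ)] (g i)).map
          (Polynomial.taylorAlgHom ξ).toRingHom).det :=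
    RingHom.map_det (Polynomial.taylorAlgHom ξ).toRingHom _
  rw [h0, polyWronskian]
  congr 1
  ext i j
  simp only [Matrix.map_apply, Matrix.of_apply]
  rw [taylor_iterate_derivative]
  rfl

lemma coreXi (N : ℕ) (ξ : ℂ) (g : Fin (N + 1) → Polynomial ℂ) (ρ : Fin (N + 1) → ℕ)
    (hρ : StrictMono ρ) (hg : ∀ i, g i ≠ 0)
    (hmult : ∀ i, Polynomial.rootMultiplicity ξ (g i) = ρ i) :
    polyWronskian g ≠ 0 ∧
      Polynomial.rootMultiplicity ξ (polyWronskian g) = (∑ i, ρ i) - N * (N + 1) / 2 := by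
  have key : ∀ p : Polynomial ℂ,
      Polynomial.rootMultiplicity ξ p = Polynomial.rootMultiplicity 0 (Polynomial.taylor ξ p) := by
    intro p
    rw [Polynomial.rootMultiplicity_eq_natTrailingDegree,
      Polynomial.rootMultiplicity_eq_natTrailingDegree', Polynomial.taylor_apply]
  have hg' : ∀ i, Polynomial.taylor ξ (g i) ≠ 0 := by
    intro i h
    exact hg i (Polynomial.taylor_injective ξ (by rw [h, map_zero]))
  obtain ⟨h1, h2⟩ := core0 N (fun i => Polynomial.taylor ξ (g i)) ρ hρ hg'
    (fun i => by rw [← key, hmult])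
  rw [taylor_polyWronskian] at h1 h2
  refine ⟨fun h => h1 (by rw [h, map_zero]), ?_⟩
  rw [key, h2]

lemma li_of_distinct_mult {n : ℕ} (ξ : ℂ) (g : Fin n → Polynomial ℂ) (ρ : Fin n → ℕ)
    (hρinj : Function.Injective ρ) (hg : ∀ i, g i ≠ 0)
    (hmult : ∀ i, Polynomial.rootMultiplicity ξ (g i) = ρ i) : LinearIndependent ℂ g := by
  classical
  rw [Fintype.linearIndependent_iff]
  intro a ha
  by_contra hcon
  push_neg at hcon
  obtain ⟨i1, hi1⟩ := hcon
  set S := Finset.univ.filter (fun i => a i ≠ 0) with hS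
  have hSne : S.Nonempty := ⟨i1, by simp [hS, hi1]⟩
  obtain ⟨i0, hi0S, hi0min⟩ := Finset.exists_min_image S ρ hSne
  have hsumS : ∑ i ∈ S, a i • g i = 0 := by
    rw [← ha]
    exact Finset.sum_subset (Finset.filter_subset _ _)
      (fun i _ hiS => by
        have : a i = 0 := by
          by_contra h
          exact hiS (Finset.mem_filter.mpr ⟨Finset.mem_univ _, h⟩)
        rw [this, zero_smul])
  have hdvd : ∀ i ∈ S.erase i0, (X - C ξ) ^ (ρ i0 + 1) ∣ a i • g i := by
    intro i hi
    obtain ⟨hne, hiS⟩ := Finset.mem_erase.mp hi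
    have h1 : ρ i0 < ρ i :=
      lt_of_le_of_ne (hi0min i hiS) (fun h => hne (hρinj h.symm))
    have h2 : ρ i0 + 1 ≤ Polynomial.rootMultiplicity ξ (g i) := by rw [hmult]; omega
    have h3 : (X - C ξ) ^ (ρ i0 + 1) ∣ g i :=
      dvd_trans (pow_dvd_pow _ h2) (Polynomial.pow_rootMultiplicity_dvd (g i) ξ)
    rw [Polynomial.smul_eq_C_mul]
    exact h3.mul_left _
  have hsum2 : a i0 • g i0 = -∑ i ∈ S.erase i0, a i • g i :=
    eq_neg_of_add_eq_zero_left ((Finset.add_sum_erase _ _ hi0S).trans hsumS)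
  have hdvd0 : (X - C ξ) ^ (ρ i0 + 1) ∣ a i0 • g i0 := by
    rw [hsum2]
    exact dvd_neg.mpr (Finset.dvd_sum hdvd)
  have hai0 : a i0 ≠ 0 := (Finset.mem_filter.mp hi0S).2
  have hdvdg : (X - C ξ) ^ (ρ i0 + 1) ∣ g i0 := by
    have h4 : g i0 = (a i0)⁻¹ • (a i0 • g i0) := by
      rw [smul_smul, inv_mul_cancel₀ hai0, one_smul]
    rw [h4, Polynomial.smul_eq_C_mul]
    exact hdvd0.mul_left _
  have h5 := (Polynomial.le_rootMultiplicity_iff (hg i0)).mpr hdvdg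
  rw [hmult] at h5
  omega

/-- Let `V` be an `(N+1)`-dimensional subspace of `ℂ[x]` with basis `f_1, …, f_{N+1}`,
`ξ ∈ ℂ`, and let `ρ_0 < ρ_1 < … < ρ_N` be the distinct root multiplicities at `ξ`
attained by nonzero elements of `V`.  Then the Wronskian of `f_1, …, f_{N+1}` is a
nonzero polynomial whose root multiplicity at `ξ` equals
`ρ_0 + ρ_1 + ⋯ + ρ_N − N(N+1)/2`. -/
theorem rootMultiplicity_wronskian (N : ℕ) (V : Submodule ℂ (Polynomial ℂ))
    (f : Fin (N + 1) → Polynomial ℂ)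
    (hind : LinearIndependent ℂ f)
    (hspan : Submodule.span ℂ (Set.range f) = V)
    (ξ : ℂ) (ρ : Fin (N + 1) → ℕ) (hρ : StrictMono ρ)
    (hset : {k : ℕ | ∃ g ∈ V, g ≠ 0 ∧ Polynomial.rootMultiplicity ξ g = k}
      = Set.range ρ) :
    polyWronskian f ≠ 0 ∧
      Polynomial.rootMultiplicity ξ (polyWronskian f)
        = (∑ i, ρ i) - N * (N + 1) / 2 := by
  classical
  have hfV : ∀ i, f i ∈ V := fun i => hspan ▸ Submodule.subset_span (Set.mem_range_self i)
  have hex : ∀ i : Fin (N + 1), ∃ g, g ∈ V ∧ g ≠ 0 ∧ Polynomial.rootMultiplicity ξ g = ρ i := by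
    intro i
    have h1 : ρ i ∈ {k : ℕ | ∃ g ∈ V, g ≠ 0 ∧ Polynomial.rootMultiplicity ξ g = k} := by
      rw [hset]; exact Set.mem_range_self i
    obtain ⟨g, hgV, hg0, hgm⟩ := h1
    exact ⟨g, hgV, hg0, hgm⟩
  choose g hgV hg0 hgm using hex
  have hgLI : LinearIndependent ℂ g := li_of_distinct_mult ξ g ρ hρ.injective hg0 hgm
  have hfin : FiniteDimensional ℂ V := by
    rw [← hspan]; exact FiniteDimensional.span_of_finite ℂ (Set.finite_range f)
  have hfr : Module.finrank ℂ V = N + 1 := by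
    rw [← hspan, finrank_span_eq_card hind, Fintype.card_fin]
  set g' : Fin (N + 1) → V := fun i => ⟨g i, hgV i⟩ with hg'
  have hg'LI : LinearIndependent ℂ g' := LinearIndependent.of_comp V.subtype hgLI
  have hspan' : Submodule.span ℂ (Set.range g') = ⊤ :=
    hg'LI.span_eq_top_of_card_eq_finrank' (by rw [hfr, Fintype.card_fin])
  have hrep : ∀ i, ∃ Mi : Fin (N + 1) → ℂ, ∑ j, Mi j • g j = f i := by
    intro i
    have h1 : (⟨f i, hfV i⟩ : V) ∈ Submodule.span ℂ (Set.range g') := by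
      rw [hspan']; trivial
    rw [Submodule.mem_span_range_iff_exists_fun] at h1
    obtain ⟨Mi, hMi⟩ := h1
    refine ⟨Mi, ?_⟩
    have h2 := congrArg (Subtype.val) hMi
    simpa [hg'] using h2
  choose M hM using hrep
  have hlin : ∀ (j : ℕ) (i), Polynomial.derivative^[j] (f i)
      = ∑ k, M i k • Polynomial.derivative^[j] (g k) := by
    intro j i
    rw [← hM i, ← Module.End.pow_apply, map_sum]
    exact Finset.sum_congr rfl fun k _ => by rw [map_smul, Module.End.pow_apply]
  have hmat : (Matrix.of fun i j : Fin (N + 1) => Polynomial.derivative^[(j : ℕ)] (f i))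
      = (Matrix.of M).map Polynomial.C
        * Matrix.of (fun i j : Fin (N + 1) => Polynomial.derivative^[(j : ℕ)] (g i)) := by
    refine Matrix.ext fun i j => ?_
    rw [Matrix.mul_apply]
    simp only [Matrix.map_apply, Matrix.of_apply]
    rw [hlin (j : ℕ) i]
    exact Finset.sum_congr rfl fun k _ => by rw [Polynomial.smul_eq_C_mul]
  have hdetM : (Matrix.of M).det ≠ 0 := by
    intro hdet
    obtain ⟨v, hv0, hvM⟩ := Matrix.exists_vecMul_eq_zero_iff.mpr hdet
    have hj : ∀ j, ∑ i, v i * Matrix.of M i j = 0 := by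
      intro j
      have := congrFun hvM j
      simpa [Matrix.vecMul, dotProduct] using this
    have hzero : ∑ i, v i • f i = 0 := by
      have h1 : ∑ i, v i • f i = ∑ j, (∑ i, v i * M i j) • g j := by
        have e1 : ∀ i, v i • f i = ∑ j, (v i * M i j) • g j := by
          intro i
          rw [← hM i, Finset.smul_sum]
          exact Finset.sum_congr rfl fun j _ => smul_smul _ _ _
        rw [Finset.sum_congr rfl fun i _ => e1 i, Finset.sum_comm]
        exact Finset.sum_congr rfl fun j _ => (Finset.sum_smul).symm
      rw [h1]
      refine Finset.sum_eq_zero fun j _ => ?_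
      have h2 := hj j
      simp only [Matrix.of_apply] at h2
      rw [h2, zero_smul]
    have := Fintype.linearIndependent_iff.mp hind v hzero
    exact hv0 (funext this)
  obtain ⟨hWg, hWgm⟩ := coreXi N ξ g ρ hρ hg0 hgm
  have hWf : polyWronskian f = Polynomial.C ((Matrix.of M).det) * polyWronskian g := by
    rw [polyWronskian, hmat, Matrix.det_mul, polyWronskian]
    congr 1
    exact (RingHom.map_det Polynomial.C (Matrix.of M)).symm
  have hCd : Polynomial.C ((Matrix.of M).det) ≠ 0 := by
    simpa using hdetM
  constructor
  · rw [hWf]; exact mul_ne_zero hCd hWg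
  · rw [hWf, Polynomial.rootMultiplicity_mul (mul_ne_zero hCd hWg),
      Polynomial.rootMultiplicity_C, zero_add, hWgm]
end

section
/- Let V be an (N+1)-dimensional ℂ-linear subspace of ℂ[x] with basis f_1, …, f_{N+1}. Then the set of degrees of nonzero elements of V has exactly N+1 elements d_0 < d_1 < … < d_N, and the Wronskian of f_1, …, f_{N+1} is a nonzero polynomial of degree d_0 + d_1 + ⋯ + d_N − N(N+1)/2. -/
/-!
Choose in `V` one polynomial `g i` of each degree `d i`. Polynomials of distinct degrees are
linearly independent, and a nonzero element of `V` is detected by its coefficients in the degrees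
`d i`, so there are exactly `dim V = N + 1` such degrees. Since every `g i` is a combination of
the `f j`, the Wronskian of `g` is a constant multiple of that of `f`. In the Wronskian matrix of
`g` the entry `(i, j)` has degree at most `d i - j`, with coefficient `lc (g i) * d i (d i - 1) ⋯
(d i - j + 1)` there; hence the coefficient of `X ^ (∑ d i - ∑ j)` in the Wronskian is
`∏ lc (g i)` times a Vandermonde determinant in the distinct `d i`, which is nonzero.
-/

open Polynomial

def natDegreeSet {R : Type*} [Semiring R] (V : Submodule R R[X]) : Set ℕ :=
  {k | ∃ g ∈ V, g ≠ 0 ∧ g.natDegree = k}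

namespace Polynomial

theorem linearIndependent_of_natDegree_injective {R ι : Type*} [CommRing R] [IsDomain R]
    {p : ι → R[X]} (h0 : ∀ i, p i ≠ 0) (hinj : Function.Injective fun i => (p i).natDegree) :
    LinearIndependent R p := by
  classical
  rw [linearIndependent_iff']
  intro s c hsum i hi
  have hdeg : ∀ j, c j • p j ≠ 0 → (c j • p j).degree = (p j).natDegree := fun j hj => by
    rw [smul_eq_C_mul, degree_C_mul (left_ne_zero_of_smul hj), degree_eq_natDegree (h0 j)]
  have hdisjoint : Set.Pairwise {j | j ∈ s ∧ c j • p j ≠ 0}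
      (Function.onFun Ne fun j => (c j • p j).degree) := by
    rintro j ⟨-, hj⟩ k ⟨-, hk⟩ hjk
    simp only [Function.onFun, hdeg j hj, hdeg k hk, ne_eq, Nat.cast_inj]
    exact hinj.ne hjk
  have hsup := degree_sum_eq_of_disjoint _ s hdisjoint
  rw [hsum, degree_zero, eq_comm, Finset.sup_eq_bot_iff] at hsup
  exact (smul_eq_zero.1 (degree_eq_bot.1 (hsup i hi))).resolve_right (h0 i)

theorem coeff_prod_sum_of_natDegree_le {R ι : Type*} [CommSemiring R] (s : Finset ι)
    (q : ι → R[X]) (e : ι → ℕ) (h : ∀ i ∈ s, (q i).natDegree ≤ e i) :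
    (∏ i ∈ s, q i).coeff (∑ i ∈ s, e i) = ∏ i ∈ s, (q i).coeff (e i) := by
  induction s using Finset.cons_induction with
  | empty => simp
  | cons a s ha ih =>
    have hs : ∀ i ∈ s, (q i).natDegree ≤ e i := fun i hi => h i (Finset.mem_cons_of_mem hi)
    rw [Finset.prod_cons, Finset.sum_cons, Finset.prod_cons,
      coeff_mul_add_eq_of_natDegree_le (h a (Finset.mem_cons_self a s))
        ((natDegree_prod_le s q).trans (Finset.sum_le_sum hs)), ih hs]

theorem coeff_iterate_derivative_natDegree_sub {R : Type*} [Semiring R] (p : R[X]) (k : ℕ) :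
    (derivative^[k] p).coeff (p.natDegree - k) = p.natDegree.descFactorial k • p.leadingCoeff := by
  rcases le_or_gt k p.natDegree with h | h
  · rw [coeff_iterate_derivative, Nat.sub_add_cancel h, leadingCoeff]
  · rw [iterate_derivative_eq_zero h, coeff_zero, Nat.descFactorial_eq_zero_iff_lt.2 h, zero_smul]

end Polynomial

section natDegreeSet

variable {K : Type*} [Field K] (V : Submodule K K[X]) [FiniteDimensional K V]

theorem natDegreeSet_finite_and_ncard_le :
    (natDegreeSet V).Finite ∧ (natDegreeSet V).ncard ≤ Module.finrank K V := by
  choose g hgV hg0 hgdeg using fun k : natDegreeSet V => k.2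
  have hli : LinearIndependent K fun k => (⟨g k, hgV k⟩ : V) :=
    LinearIndependent.of_comp V.subtype <| linearIndependent_of_natDegree_injective hg0
      fun k l h => Subtype.ext <| by
        simpa only [Function.comp_apply, Submodule.subtype_apply, hgdeg] using h
  have := hli.finite
  have := Fintype.ofFinite (natDegreeSet V)
  refine ⟨Set.toFinite _, ?_⟩
  rw [← Nat.card_coe_set_eq, Nat.card_eq_fintype_card]
  exact hli.fintype_card_le_finrank

theorem ncard_natDegreeSet : (natDegreeSet V).ncard = Module.finrank K V := by
  obtain ⟨hfin, hle⟩ := natDegreeSet_finite_and_ncard_le V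
  have := hfin.fintype
  let coeffs : V →ₗ[K] natDegreeSet V → K := LinearMap.pi fun k => (lcoeff K k).comp V.subtype
  have hinj : Function.Injective coeffs := by
    refine (injective_iff_map_eq_zero coeffs).2 fun p hp => ?_
    by_contra hp0
    have hmem : (p : K[X]).natDegree ∈ natDegreeSet V :=
      ⟨p, p.2, fun h => hp0 (Subtype.ext h), rfl⟩
    exact hp0 (Subtype.ext (leadingCoeff_eq_zero.1 (congrFun hp ⟨_, hmem⟩)))
  refine hle.antisymm ?_
  calc Module.finrank K V ≤ Module.finrank K (natDegreeSet V → K) :=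
        LinearMap.finrank_le_finrank_of_injective hinj
    _ = (natDegreeSet V).ncard := by
        rw [Module.finrank_fintype_fun_eq_card, ← Nat.card_coe_set_eq, Nat.card_eq_fintype_card]

theorem exists_strictMono_natDegreeSet_eq_range {n : ℕ} (hV : Module.finrank K V = n) :
    ∃ d : Fin n → ℕ, StrictMono d ∧ natDegreeSet V = Set.range d := by
  obtain ⟨hfin, -⟩ := natDegreeSet_finite_and_ncard_le V
  have hcard : hfin.toFinset.card = n := by
    rw [← Set.ncard_eq_toFinset_card _ hfin, ncard_natDegreeSet, hV]
  exact ⟨hfin.toFinset.orderEmbOfFin hcard, (hfin.toFinset.orderEmbOfFin hcard).strictMono,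
    by rw [Finset.range_orderEmbOfFin, hfin.coe_toFinset]⟩

end natDegreeSet

namespace Matrix

/- `hzero` keeps the truncated subtraction `a i - b j` harmless: a permutation meeting an entry
with `a i < b j` contributes zero both to `A.det` and to the determinant of the corner
coefficients `(A i j).coeff (a i - b j)`. -/

variable {R ι : Type*} [CommRing R] [Fintype ι] {A : Matrix ι ι R[X]} {a b : ι → ℕ}

theorem natDegree_prod_perm_le_and_coeff (hdeg : ∀ i j, (A i j).natDegree ≤ a i - b j)
    (hzero : ∀ i j, a i < b j → A i j = 0) (σ : Equiv.Perm ι) :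
    (∏ j, A (σ j) j).natDegree ≤ ∑ i, a i - ∑ j, b j ∧
      (∏ j, A (σ j) j).coeff (∑ i, a i - ∑ j, b j) = ∏ j, (A (σ j) j).coeff (a (σ j) - b j) := by
  by_cases! hσ : ∃ j, a (σ j) < b j
  · obtain ⟨j, hj⟩ := hσ
    have hA : A (σ j) j = 0 := hzero _ _ hj
    rw [Finset.prod_eq_zero (f := fun j => A (σ j) j) (Finset.mem_univ j) hA,
      Finset.prod_eq_zero (f := fun j => (A (σ j) j).coeff _) (Finset.mem_univ j)
        (by rw [hA, coeff_zero])]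
    exact ⟨natDegree_zero.trans_le (Nat.zero_le _), coeff_zero _⟩
  · have hsum : ∑ j, (a (σ j) - b j) = ∑ i, a i - ∑ j, b j := by
      rw [Finset.sum_tsub_distrib _ fun j _ => hσ j, Equiv.sum_comp σ a]
    rw [← hsum]
    exact ⟨(natDegree_prod_le _ _).trans (Finset.sum_le_sum fun j _ => hdeg _ _),
      coeff_prod_sum_of_natDegree_le _ _ _ fun j _ => hdeg _ _⟩

variable [DecidableEq ι]

theorem natDegree_det_le_and_coeff (hdeg : ∀ i j, (A i j).natDegree ≤ a i - b j)
    (hzero : ∀ i j, a i < b j → A i j = 0) :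
    A.det.natDegree ≤ ∑ i, a i - ∑ j, b j ∧
      A.det.coeff (∑ i, a i - ∑ j, b j) = (of fun i j => (A i j).coeff (a i - b j)).det := by
  have hperm := natDegree_prod_perm_le_and_coeff hdeg hzero
  rw [det_apply, det_apply]
  refine ⟨natDegree_sum_le_of_forall_le _ _ fun σ _ =>
    (natDegree_smul_le _ _).trans (hperm σ).1, ?_⟩
  rw [finsetSum_coeff]
  refine Finset.sum_congr rfl fun σ _ => ?_
  rw [coeff_smul, (hperm σ).2]
  rfl

theorem det_ne_zero_and_natDegree_det_eq (hdeg : ∀ i j, (A i j).natDegree ≤ a i - b j)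
    (hzero : ∀ i j, a i < b j → A i j = 0)
    (hcorner : (of fun i j => (A i j).coeff (a i - b j)).det ≠ 0) :
    A.det ≠ 0 ∧ A.det.natDegree = ∑ i, a i - ∑ j, b j := by
  obtain ⟨hle, hcoeff⟩ := natDegree_det_le_and_coeff hdeg hzero
  rw [← hcoeff] at hcorner
  exact ⟨fun h => hcorner (by rw [h, coeff_zero]), hle.antisymm (le_natDegree_of_ne_zero hcorner)⟩

end Matrix

theorem Matrix.det_descFactorial_ne_zero {R : Type*} [CommRing R] [IsDomain R] [CharZero R]
    {n : ℕ} {d : Fin n → ℕ} (hd : Function.Injective d) :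
    (of fun i j : Fin n => ((d i).descFactorial j : R)).det ≠ 0 := by
  simp_rw [← descPochhammer_eval_eq_descFactorial]
  rw [← det_eval_matrixOfPolynomials_eq_det_vandermonde (fun i => (d i : R))
    (fun j => descPochhammer R j) (fun j => descPochhammer_natDegree R j)
    (fun j => monic_descPochhammer R j), det_vandermonde_ne_zero_iff]
  exact Nat.cast_injective.comp hd

theorem polyWronskian_linearCombination {n : ℕ} (M : Matrix (Fin n) (Fin n) ℂ)
    (g : Fin n → ℂ[X]) :
    polyWronskian (fun i => ∑ j, M i j • g j) = C M.det * polyWronskian g := by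
  have hmat : (Matrix.of fun i j : Fin n => derivative^[j] (∑ k, M i k • g k)) =
      M.map C * Matrix.of fun i j : Fin n => derivative^[j] (g i) := by
    ext i j
    simp [Matrix.mul_apply, iterate_derivative_sum, smul_eq_C_mul]
  rw [polyWronskian, polyWronskian, hmat, Matrix.det_mul, ← RingHom.mapMatrix_apply,
    ← RingHom.map_det]

theorem exists_polyWronskian_eq_C_mul_of_mem_span {n : ℕ} {f g : Fin n → ℂ[X]}
    (h : ∀ i, g i ∈ Submodule.span ℂ (Set.range f)) :
    ∃ c, polyWronskian g = C c * polyWronskian f := by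
  choose M hM using fun i => (Submodule.mem_span_range_iff_exists_fun ℂ).1 (h i)
  refine ⟨(Matrix.of M).det, ?_⟩
  rw [← polyWronskian_linearCombination]
  exact congrArg polyWronskian (funext fun i => (hM i).symm)

theorem polyWronskian_ne_zero_and_natDegree_eq {n : ℕ} {g : Fin n → ℂ[X]} (h0 : ∀ i, g i ≠ 0)
    (hinj : Function.Injective fun i => (g i).natDegree) :
    polyWronskian g ≠ 0 ∧
      (polyWronskian g).natDegree = ∑ i, (g i).natDegree - ∑ j : Fin n, (j : ℕ) := by
  refine Matrix.det_ne_zero_and_natDegree_det_eq (fun i j => natDegree_iterate_derivative _ _)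
    (fun i j h => iterate_derivative_eq_zero h) ?_
  simp_rw [Matrix.of_apply, coeff_iterate_derivative_natDegree_sub, nsmul_eq_mul,
    mul_comm _ (leadingCoeff _)]
  exact (Matrix.det_mul_column (fun i => (g i).leadingCoeff)
    (Matrix.of fun i j : Fin n => ((g i).natDegree.descFactorial j : ℂ))).trans_ne <|
      mul_ne_zero (Finset.prod_ne_zero_iff.2 fun i _ => leadingCoeff_ne_zero.2 (h0 i))
        (Matrix.det_descFactorial_ne_zero hinj)

/-- Let `V` be an `(N+1)`-dimensional subspace of `ℂ[x]` with basis `f_1, …, f_{N+1}`.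
Then the set of degrees of nonzero elements of `V` has exactly `N+1` elements
`d_0 < d_1 < … < d_N`, and the Wronskian of `f_1, …, f_{N+1}` is a nonzero polynomial
of degree `d_0 + d_1 + ⋯ + d_N − N(N+1)/2`. -/
theorem degree_wronskian (N : ℕ) (V : Submodule ℂ (Polynomial ℂ))
    (f : Fin (N + 1) → Polynomial ℂ)
    (hind : LinearIndependent ℂ f)
    (hspan : Submodule.span ℂ (Set.range f) = V) :
    ∃ dseq : Fin (N + 1) → ℕ, StrictMono dseq ∧
      {k : ℕ | ∃ g ∈ V, g ≠ 0 ∧ g.natDegree = k} = Set.range dseq ∧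
      polyWronskian f ≠ 0 ∧
      (polyWronskian f).natDegree = (∑ i, dseq i) - N * (N + 1) / 2 := by
  subst hspan
  have := FiniteDimensional.span_of_finite ℂ (Set.finite_range f)
  have hrank : Module.finrank ℂ (Submodule.span ℂ (Set.range f)) = N + 1 := by
    rw [finrank_span_eq_card hind, Fintype.card_fin]
  obtain ⟨d, hd, hdegs⟩ := exists_strictMono_natDegreeSet_eq_range _ hrank
  choose g hgV hg0 hgdeg using fun i => (hdegs ▸ Set.mem_range_self i : d i ∈ natDegreeSet _)
  obtain ⟨c, hc⟩ := exists_polyWronskian_eq_C_mul_of_mem_span hgV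
  obtain ⟨hWg, hWgdeg⟩ := polyWronskian_ne_zero_and_natDegree_eq hg0 <| by
    simpa only [hgdeg] using hd.injective
  have hc0 : c ≠ 0 := fun h => hWg (by rw [hc, h, C_0, zero_mul])
  refine ⟨d, hd, hdegs, right_ne_zero_of_mul (hc ▸ hWg), ?_⟩
  rw [← natDegree_C_mul hc0, ← hc, hWgdeg, Fin.sum_univ_eq_sum_range (fun j => j),
    Finset.sum_range_id, Nat.add_sub_cancel, mul_comm]
  simp only [hgdeg]
end

section
/- Let N ≥ 1, m ≥ 0 and d be natural numbers with K := d − m − N ≥ 1, and let 0 ≤ l_1 < l_2 < … < l_K ≤ d be natural numbers. Then there exist unique complex numbers C_1, …, C_K such that for every i = 1, …, K the coefficient of x^{l_i} in the polynomial (x+1)^{m+N} + ∑_{j=1}^{K} C_j·(x+1)^{m+N+j} is zero. -/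
/-!
The coefficient conditions form a square linear system in `c`, so it suffices that the
homogeneous system has only the trivial solution. If `q = ∑ c_j (X+1)^(m+N+1+j)` has zero
coefficients at the `K` positions `l_i ≤ m+N+K`, then `q` has at most `m+N+1` nonzero
coefficients, while `-1` is a root of multiplicity `≥ m+N+1`. But in characteristic zero a
nonzero root of a nonzero polynomial has multiplicity smaller than its number of nonzero
coefficients (peel off factors of `X` and differentiate), so `q = 0`, and `c = 0` because the
powers of `X+1` are linearly independent.
-/

open Polynomial Finset

namespace Polynomial

section Support

variable {R : Type*}

theorem support_X_mul [Semiring R] (p : R[X]) :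
    (X * p).support = p.support.map (addRightEmbedding 1) := by
  ext n
  rcases n with _ | n
  · simp
  · simp [coeff_X_mul]

theorem map_support_derivative [Semiring R] [IsAddTorsionFree R] (p : R[X]) :
    (derivative p).support.map (addRightEmbedding 1) = p.support.erase 0 := by
  ext n
  rcases n with _ | n
  · simp
  · simp only [mem_map, mem_erase, addRightEmbedding_apply, mem_support_derivative]
    grind

theorem card_support_le_of_coeff_eq_zero [Semiring R] {p : R[X]} {D : ℕ} (hp : p.natDegree ≤ D)
    {s : Finset ℕ} (hs : s ⊆ range (D + 1)) (hcoeff : ∀ k ∈ s, p.coeff k = 0) :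
    #p.support + #s ≤ D + 1 := by
  have hsub : p.support ⊆ range (D + 1) \ s := fun k hk =>
    mem_sdiff.mpr ⟨supp_subset_range (Nat.lt_succ_of_le hp) hk,
      fun hks => mem_support_iff.mp hk (hcoeff k hks)⟩
  have := card_le_card hsub
  rw [card_sdiff_of_subset hs, card_range] at this
  have := card_le_card hs
  rw [card_range] at this
  omega

end Support

section RootMultiplicity

variable {R : Type*} [CommRing R] [IsDomain R] [CharZero R]

theorem rootMultiplicity_lt_card_support {p : R[X]} (hp : p ≠ 0) {a : R} (ha : a ≠ 0) :
    p.rootMultiplicity a < #p.support := by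
  induction hd : p.natDegree using Nat.strong_induction_on generalizing p with
  | _ d ih =>
  have hcard : 0 < #p.support := card_pos.mpr (nonempty_support_iff.mpr hp)
  by_cases hroot : p.IsRoot a
  swap
  · rwa [rootMultiplicity_eq_zero hroot]
  by_cases h0 : p.coeff 0 = 0
  · obtain ⟨g, rfl⟩ := X_dvd_iff.mpr h0
    have hg : g ≠ 0 := right_ne_zero_of_mul hp
    have hX : ¬ (X : R[X]).IsRoot a := by simpa using ha
    rw [rootMultiplicity_mul hp, rootMultiplicity_eq_zero hX, zero_add, support_X_mul, card_map]
    exact ih _ (by rw [← hd, natDegree_X_mul hg]; omega) hg rfl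
  · have hdeg : p.natDegree ≠ 0 := fun h => h0 <| by
      rw [eq_C_of_natDegree_eq_zero h] at hroot
      simpa using hroot
    have hp' : derivative p ≠ 0 := mt derivative_eq_zero.mp hdeg
    have h := ih _ (hd ▸ natDegree_derivative_lt hdeg) hp' rfl
    rw [derivative_rootMultiplicity_of_root hroot, ← card_map (addRightEmbedding 1),
      map_support_derivative, card_erase_of_mem (mem_support_iff.mpr h0)] at h
    have := (rootMultiplicity_pos hp).mpr hroot
    omega

theorem eq_zero_of_pow_dvd_of_card_support_le {p : R[X]} {a : R} (ha : a ≠ 0) {n : ℕ}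
    (hdvd : (X - C a) ^ n ∣ p) (hcard : #p.support ≤ n) : p = 0 := by
  by_contra hp
  have := rootMultiplicity_lt_card_support hp ha
  have := (le_rootMultiplicity_iff hp).mpr hdvd
  omega

end RootMultiplicity

theorem linearIndependent_X_add_C_pow {R : Type*} [CommRing R] (r : R) :
    LinearIndependent R fun n : ℕ => (X + C r) ^ n := by
  have := (basisMonomials R).linearIndependent.map' (taylor r)
    (LinearMap.ker_eq_bot.mpr (taylor_injective r))
  simpa [Function.comp_def, taylor_monomial] using this

section ShiftedPowers

variable {F : Type*} [Field F] {K : ℕ}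

noncomputable def shiftedPowerSystem (a : F) (n : ℕ) (l : Fin K → ℕ) :
    (Fin K → F) →ₗ[F] Fin K → F :=
  (LinearMap.pi fun i => lcoeff F (l i)) ∘ₗ
    Fintype.linearCombination F fun j : Fin K => (X + C a) ^ (n + 1 + (j : ℕ))

theorem shiftedPowerSystem_apply (a : F) (n : ℕ) (l : Fin K → ℕ) (c : Fin K → F) (i : Fin K) :
    shiftedPowerSystem a n l c i =
      (∑ j, C (c j) * (X + C a) ^ (n + 1 + (j : ℕ))).coeff (l i) := by
  simp [shiftedPowerSystem, Fintype.linearCombination_apply, C_mul']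

theorem shiftedPowerSystem_injective [CharZero F] {a : F} (ha : a ≠ 0) {n : ℕ} {l : Fin K → ℕ}
    (hl : Function.Injective l) (hld : ∀ i, l i ≤ n + K) :
    Function.Injective (shiftedPowerSystem a n l) := by
  rw [← LinearMap.ker_eq_bot, LinearMap.ker_eq_bot']
  intro c hc
  set q := ∑ j, C (c j) * (X + C a) ^ (n + 1 + (j : ℕ))
  have hcoeff : ∀ k ∈ univ.image l, q.coeff k = 0 := by
    intro k hk
    obtain ⟨i, -, rfl⟩ := mem_image.mp hk
    rw [← shiftedPowerSystem_apply, hc, Pi.zero_apply]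
  have hdvd : (X - C (-a)) ^ (n + 1) ∣ q := by
    rw [map_neg, sub_neg_eq_add]
    exact dvd_sum fun j _ => (pow_dvd_pow _ (by omega)).mul_left _
  have hdeg : q.natDegree ≤ n + K := natDegree_sum_le_of_forall_le _ _ fun j _ =>
    (natDegree_C_mul_le _ _).trans (by rw [natDegree_pow_X_add_C]; omega)
  have hrange : univ.image l ⊆ range (n + K + 1) := by
    simpa [subset_iff, Nat.lt_succ_iff] using hld
  have hcard := card_support_le_of_coeff_eq_zero hdeg hrange hcoeff
  rw [card_image_of_injective _ hl, card_univ, Fintype.card_fin] at hcard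
  have hq : q = 0 := eq_zero_of_pow_dvd_of_card_support_le (neg_ne_zero.mpr ha) hdvd (by omega)
  have hli := (linearIndependent_X_add_C_pow a).comp (fun j : Fin K => n + 1 + (j : ℕ))
    fun i j h => Fin.val_injective (Nat.add_left_cancel h)
  exact _root_.funext (Fintype.linearIndependent_iff.mp hli c (by simp_rw [← C_mul']; exact hq))

theorem shiftedPowerSystem_bijective [CharZero F] {a : F} (ha : a ≠ 0) {n : ℕ} {l : Fin K → ℕ}
    (hl : Function.Injective l) (hld : ∀ i, l i ≤ n + K) :
    Function.Bijective (shiftedPowerSystem a n l) :=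
  have h := shiftedPowerSystem_injective ha hl hld
  ⟨h, LinearMap.injective_iff_surjective.mp h⟩

end ShiftedPowers

end Polynomial

theorem unique_coefficients_general (N m d K : ℕ)
    (hK : m + N + K = d)
    (l : Fin K → ℕ) (hlmono : StrictMono l) (hld : ∀ i, l i ≤ d) :
    ∃! c : Fin K → ℂ, ∀ i : Fin K,
      Polynomial.coeff
        ((Polynomial.X + 1) ^ (m + N)
          + ∑ j : Fin K, Polynomial.C (c j) * (Polynomial.X + 1) ^ (m + N + 1 + (j : ℕ)))
        (l i) = 0 := by
  have hsystem := shiftedPowerSystem_bijective (one_ne_zero' ℂ) hlmono.injective (hK ▸ hld)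
  have hcoeff (c : Fin K → ℂ) :
      (∀ i, ((X + 1) ^ (m + N) + ∑ j, C (c j) * (X + 1) ^ (m + N + 1 + (j : ℕ))).coeff (l i) = 0)
        ↔ shiftedPowerSystem 1 (m + N) l c = -fun i => ((X + 1) ^ (m + N)).coeff (l i) := by
    simp [funext_iff, shiftedPowerSystem_apply, eq_neg_iff_add_eq_zero, add_comm]
  simpa only [hcoeff] using hsystem.existsUnique _

/-- Let `N ≥ 1`, `m ≥ 0`, `K ≥ 1` with `K = d − m − N`, and let
`0 ≤ l_1 < … < l_K ≤ d`.  Then there exist unique complex numbers `C_1, …, C_K` such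
that for every `i` the coefficient of `x^{l_i}` in
`(x+1)^{m+N} + ∑_{j=1}^{K} C_j (x+1)^{m+N+j}` vanishes. -/
theorem unique_coefficients (N m d K : ℕ) (hN : 1 ≤ N) (hK1 : 1 ≤ K)
    (hK : m + N + K = d)
    (l : Fin K → ℕ) (hlmono : StrictMono l) (hld : ∀ i, l i ≤ d) :
    ∃! c : Fin K → ℂ, ∀ i : Fin K,
      Polynomial.coeff
        ((Polynomial.X + 1) ^ (m + N)
          + ∑ j : Fin K, Polynomial.C (c j) * (Polynomial.X + 1) ^ (m + N + 1 + (j : ℕ)))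
        (l i) = 0 :=
  unique_coefficients_general N m d K hK l hlmono hld
end

section
/- Let K ≥ 1 and d be natural numbers with K ≤ d+1, and let 0 ≤ l_1 < l_2 < … < l_K ≤ d be natural numbers. Then the K×K matrix whose (i,j) entry is the binomial coefficient (d+1−j choose l_i), regarded as a matrix over ℚ, has nonzero determinant. -/
/-!
Write `a = d + 1 - K`; reversing the columns turns the matrix into `((a + j).choose (l i))`,
and the monotonicity of `l` gives `l i ≤ a + i`. Under this condition the determinant is nonzero,
by induction on the size and on `a`. If `l 0 = 0`, subtracting from each column its predecessor
leaves `(1, 0, …, 0)` as the first row, and by Pascal's rule the complementary minor is the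
same kind of determinant for the rows `l i - 1`, `i ≥ 1`. If `l 0 ≠ 0`, every `l i` is
positive, and the absorption identity `l * (n + 1).choose l = (n + 1) * n.choose (l - 1)`
rescales rows and columns to pass from `a + 1` to `a` and from `l` to `l - 1`.
-/

open Matrix

lemma StrictMono.add_sub_le_nat {n : ℕ} {f : Fin n → ℕ} (hf : StrictMono f) {i j : Fin n}
    (hij : i ≤ j) : f i + (j - i : ℕ) ≤ f j := by
  suffices ∀ m (j : Fin n), (j : ℕ) = i + m → f i + m ≤ f j from
    this _ j (by rw [Fin.le_def] at hij; omega)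
  intro m
  induction m with
  | zero => intro j hj; simp [show j = i from Fin.ext hj]
  | succ m ih =>
    intro j hj
    have hprev := ih ⟨i + m, by omega⟩ rfl
    have hstep : f ⟨i + m, by omega⟩ < f j := hf (Fin.lt_def.2 (show (i : ℕ) + m < j by omega))
    omega

theorem Matrix.det_eq_det_of_col_sub_pred {R : Type*} [CommRing R] {k : ℕ}
    (M : Matrix (Fin (k + 1)) (Fin (k + 1)) R) :
    M.det = (of fun i => Fin.cons (M i 0) fun j => M i j.succ - M i j.castSucc).det :=
  det_eq_of_forall_col_eq_smul_add_pred (fun _ => 1) (fun _ => rfl) fun _ _ => by simp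

section

variable (R : Type*) [CommRing R]

def binomMatrix {n : ℕ} (a : ℕ) (l : Fin n → ℕ) : Matrix (Fin n) (Fin n) R :=
  of fun i j => ((a + j).choose (l i) : R)

variable {R}

theorem det_binomMatrix_of_apply_zero_eq_zero {k a : ℕ} {l : Fin (k + 1) → ℕ} (h0 : l 0 = 0)
    (hl : ∀ i : Fin k, l i.succ ≠ 0) :
    (binomMatrix R a l).det = (binomMatrix R a fun i => l i.succ - 1).det := by
  rw [det_eq_det_of_col_sub_pred, det_succ_row_zero, Fin.sum_univ_succ]
  simp only [binomMatrix, of_apply, h0, Fin.cons_zero, Fin.cons_succ, Fin.val_zero,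
    Fin.val_succ, Fin.val_castSucc, Fin.succAbove_zero, Nat.choose_zero_right, sub_self, pow_zero,
    Nat.cast_one, mul_one, one_mul, mul_zero, zero_mul, add_zero, Finset.sum_const_zero]
  congr 1
  ext i j
  obtain ⟨m, hm⟩ := Nat.exists_eq_add_one_of_ne_zero (hl i)
  simp only [submatrix_apply, of_apply, Fin.cons_succ, hm, Nat.add_sub_cancel,
    ← add_assoc, Nat.choose_succ_succ', Nat.cast_add, add_sub_cancel_right]

theorem det_binomMatrix_add_one {n a : ℕ} {l : Fin n → ℕ} (hl : ∀ i, l i ≠ 0) :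
    (∏ i, (l i : R)) * (binomMatrix R (a + 1) l).det =
      (∏ j : Fin n, ((a + 1 + j : ℕ) : R)) * (binomMatrix R a fun i => l i - 1).det := by
  rw [← det_mul_column, ← det_mul_row]
  congr 1
  ext i j
  obtain ⟨m, hm⟩ := Nat.exists_eq_add_one_of_ne_zero (hl i)
  have := Nat.add_one_mul_choose_eq (a + j) m
  simp only [binomMatrix, of_apply, hm, Nat.add_sub_cancel]
  rw [show a + 1 + (j : ℕ) = a + j + 1 by ring]
  exact_mod_cast congrArg (Nat.cast (R := R)) (this.trans (mul_comm _ _)).symm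

theorem det_binomMatrix_ne_zero [IsDomain R] [CharZero R] {n a : ℕ} {l : Fin n → ℕ}
    (hl : StrictMono l) (hla : ∀ i, l i ≤ a + i) : (binomMatrix R a l).det ≠ 0 := by
  induction n generalizing a with
  | zero => simp
  | succ k ihk =>
    have of_zero {a} {l : Fin (k + 1) → ℕ} (hl : StrictMono l) (hla : ∀ i, l i ≤ a + i)
        (h0 : l 0 = 0) : (binomMatrix R a l).det ≠ 0 := by
      have hpos (i : Fin k) : 0 < l i.succ := h0 ▸ hl i.succ_pos
      rw [det_binomMatrix_of_apply_zero_eq_zero h0 fun i => (hpos i).ne']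
      refine ihk (fun i j hij => ?_) fun i => ?_
      · have := hl (Fin.succ_lt_succ_iff.2 hij)
        have := hpos i
        omega
      · have := hla i.succ
        rw [Fin.val_succ] at this
        omega
    induction a generalizing l with
    | zero => exact of_zero hl hla (by simpa using hla 0)
    | succ a iha =>
      by_cases h0 : l 0 = 0
      · exact of_zero hl hla h0
      have hpos (i : Fin (k + 1)) : l i ≠ 0 := by
        have := hl.monotone (Fin.zero_le i)
        omega
      have hprod : (∏ j : Fin (k + 1), ((a + 1 + j : ℕ) : R)) ≠ 0 :=
        Finset.prod_ne_zero_iff.2 fun j _ => Nat.cast_ne_zero.2 (by omega)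
      have hdet' := iha (l := fun i => l i - 1) (fun i j hij => ?_) fun i => ?_
      · intro hdet
        apply mul_ne_zero hprod hdet'
        rw [← det_binomMatrix_add_one hpos, hdet, mul_zero]
      · have := hl hij
        have := hpos i
        dsimp only
        omega
      · have := hla i
        omega

end

theorem binomial_matrix_det_ne_zero_general (K d : ℕ) (hKd : K ≤ d + 1)
    (l : Fin K → ℕ) (hlmono : StrictMono l) (hld : ∀ i, l i ≤ d) :
    Matrix.det (Matrix.of fun i j : Fin K =>
      ((Nat.choose (d + 1 - ((j : ℕ) + 1)) (l i) : ℚ))) ≠ 0 := by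
  have hrev : (of fun i j : Fin K => ((d + 1 - ((j : ℕ) + 1)).choose (l i) : ℚ)) =
      (binomMatrix ℚ (d + 1 - K) l).submatrix id Fin.revPerm := by
    ext i j
    simp only [binomMatrix, submatrix_apply, of_apply, id_eq, Fin.revPerm_apply, Fin.val_rev]
    congr 3
    omega
  rw [hrev, det_permute']
  refine mul_ne_zero (by simp) (det_binomMatrix_ne_zero hlmono fun i => ?_)
  have hK := i.pos
  have hgap := hlmono.add_sub_le_nat (j := ⟨K - 1, by omega⟩) (Nat.le_sub_one_of_lt i.isLt)
  have := hld ⟨K - 1, by omega⟩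
  simp only at hgap
  omega

/-- Let `1 ≤ K ≤ d+1` and `0 ≤ l_1 < … < l_K ≤ d`.  Then the `K × K` matrix with
`(i,j)` entry the binomial coefficient `(d+1−j choose l_i)`, regarded over `ℚ`, has
nonzero determinant. -/
theorem binomial_matrix_det_ne_zero (K d : ℕ) (hK1 : 1 ≤ K) (hKd : K ≤ d + 1)
    (l : Fin K → ℕ) (hlmono : StrictMono l) (hld : ∀ i, l i ≤ d) :
    Matrix.det (Matrix.of fun i j : Fin K =>
      ((Nat.choose (d + 1 - ((j : ℕ) + 1)) (l i) : ℚ))) ≠ 0 :=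
  binomial_matrix_det_ne_zero_general K d hKd l hlmono hld
end

section
/- Let N ≥ 1 and let d, d_1, …, d_N, ρ_1, …, ρ_N be natural numbers satisfying the interleaving 0 ≤ d_1 < ρ_N ≤ d_2 < ρ_{N−1} ≤ d_3 < ⋯ ≤ d_N < ρ_1 ≤ d, and set m := d + (d_1+⋯+d_N) − (ρ_1+⋯+ρ_N). Then there is at most one (N+1)-dimensional ℂ-linear subspace V of the space of complex polynomials of degree at most d such that: (i) the set of degrees of nonzero elements of V is exactly {d_1, …, d_N, d}; (ii) the set of root multiplicities at 0 of nonzero elements of V is exactly {0, ρ_N, ρ_{N−1}, …, ρ_1}; and (iii) V contains a nonzero polynomial whose root multiplicity at −1 is at least m+N. -/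
/-!
Put `σ = (0, ρ_N, …, ρ_1)` and `(D_0, …, D_N) = (d_1, …, d_N, d)`. The windows `[σ_i, D_i]` are
disjoint and together contain `m + N + 1` exponents. Imposing that `f ∈ V` vanish at the `N`
exponents `D_k` (`k > i`) and `σ_k` (`k < i`) leaves a nonzero solution, which by the degree and
order conditions is supported in the `i`-th window; so `V` has a basis adapted to the windows.
Hence every `p ∈ V` is supported on their union, and the part of `p` in each window lies in `V`.

A nonzero polynomial with `k` terms vanishes to order `< k` at any nonzero point. Therefore two
polynomials supported on the windows and vanishing to order `≥ m + N` at `-1` are proportional,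
and none of the `N + 1` window parts of such a `p` is zero. These parts are then a basis of `V`,
so `V` is determined by `p`, which is the same for both spaces up to a scalar.
-/

open Polynomial Finset Function Module Submodule

namespace Polynomial

section Semiring

variable {R : Type*} [Semiring R]

noncomputable def restrictSupport (s : Finset ℕ) : R[X] →ₗ[R] R[X] :=
  ∑ j ∈ s, (monomial j).comp (lcoeff R j)

variable {s : Finset ℕ} {f : R[X]}

theorem coeff_restrictSupport (j : ℕ) :
    (restrictSupport s f).coeff j = if j ∈ s then f.coeff j else 0 := by
  simp [restrictSupport, coeff_monomial]

theorem support_restrictSupport_subset : (restrictSupport s f).support ⊆ s := by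
  intro j hj
  by_contra hjs
  rw [mem_support_iff, coeff_restrictSupport, if_neg hjs] at hj
  exact hj rfl

theorem restrictSupport_eq_self (h : f.support ⊆ s) : restrictSupport s f = f := by
  ext j
  rw [coeff_restrictSupport]
  split_ifs with hj
  · rfl
  · exact (notMem_support_iff.1 fun hf => hj (h hf)).symm

theorem restrictSupport_eq_zero_iff : restrictSupport s f = 0 ↔ Disjoint f.support s := by
  simp only [Polynomial.ext_iff, coeff_restrictSupport, coeff_zero, disjoint_left,
    mem_support_iff, ite_eq_right_iff]
  exact ⟨fun h j hj hjs => hj (h j hjs), fun h j hjs => by_contra fun hj => h hj hjs⟩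

end Semiring

theorem linearIndependent_of_support_subset {R ι : Type*} [Ring R] [NoZeroDivisors R]
    {f : ι → R[X]} {s : ι → Finset ℕ} (hs : Pairwise (Disjoint on s))
    (hf0 : ∀ i, f i ≠ 0) (hfs : ∀ i, (f i).support ⊆ s i) : LinearIndependent R f := by
  classical
  rw [linearIndependent_iff']
  intro t c hc i hi
  obtain ⟨j, hj⟩ := nonempty_support_iff.2 (hf0 i)
  have hcoeff := congrArg (coeff · j) hc
  simp only [finsetSum_coeff, coeff_smul, smul_eq_mul, coeff_zero] at hcoeff
  rw [sum_eq_single i (fun k _ hki => ?_) (absurd hi)] at hcoeff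
  · exact (mul_eq_zero.1 hcoeff).resolve_right (mem_support_iff.1 hj)
  · rw [notMem_support_iff.1 fun hk => disjoint_left.1 (hs hki) (hfs k hk) (hfs i hj),
      mul_zero]

theorem coeff_C_mul_sub_X_mul_derivative {R : Type*} [CommRing R] (f : R[X]) (v j : ℕ) :
    (C (v : R) * f - X * derivative f).coeff j = ((v : R) - j) * f.coeff j := by
  rcases j with _ | j
  · simp
  · simp [coeff_X_mul, coeff_derivative]
    ring

section RootMultiplicity

variable {R : Type*} [CommRing R] [NoZeroDivisors R] {a : R}

theorem rootMultiplicity_eq_zero_of_card_support_le_one (ha : a ≠ 0) {f : R[X]}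
    (hf : #f.support ≤ 1) : f.rootMultiplicity a = 0 := by
  obtain ⟨k, c, rfl⟩ := card_support_le_one_iff_monomial.1 hf
  rcases eq_or_ne c 0 with rfl | hc
  · simp
  · exact rootMultiplicity_eq_zero (by simpa [IsRoot, eval_monomial, hc] using pow_ne_zero k ha)

theorem rootMultiplicity_lt_card_support_s15 [CharZero R] (ha : a ≠ 0) {f : R[X]} (hf : f ≠ 0) :
    f.rootMultiplicity a < #f.support := by
  induction hn : #f.support using Nat.strong_induction_on generalizing f with
  | _ n ih =>
    subst hn
    rcases le_or_gt #f.support 1 with h1 | h1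
    · rw [rootMultiplicity_eq_zero_of_card_support_le_one ha h1]
      exact card_pos.2 (nonempty_support_iff.2 hf)
    -- `g` loses the lowest term of `f`, and its multiplicity at `a` drops by at most one.
    set v := f.natTrailingDegree
    set g := C (v : R) * f - X * derivative f
    have hgf : ∀ j ∈ f.support, j ≠ v → j ∈ g.support := by
      intro j hj hjv
      rw [mem_support_iff, coeff_C_mul_sub_X_mul_derivative]
      refine mul_ne_zero (sub_ne_zero.2 fun h => hjv ?_) (mem_support_iff.1 hj)
      exact_mod_cast h.symm
    have hsupp : g.support ⊆ f.support.erase v := by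
      intro j hj
      rw [mem_support_iff, coeff_C_mul_sub_X_mul_derivative] at hj
      refine mem_erase.2 ⟨?_, mem_support_iff.2 (right_ne_zero_of_mul hj)⟩
      rintro rfl
      simp at hj
    have hg0 : g ≠ 0 := by
      obtain ⟨j, hj, hjv⟩ := exists_mem_ne h1 v
      exact fun h => by simpa [h] using hgf j hj hjv
    have hmult : f.rootMultiplicity a - 1 ≤ g.rootMultiplicity a := by
      rw [le_rootMultiplicity_iff hg0]
      have hf := pow_rootMultiplicity_dvd f a
      exact dvd_sub (((pow_dvd_pow _ (Nat.sub_le _ _)).trans hf).mul_left _)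
        ((pow_sub_one_dvd_derivative_of_pow_dvd hf).mul_left _)
    have hlt : #g.support < #f.support := (card_le_card hsupp).trans_lt
      (card_erase_lt_of_mem (natTrailingDegree_mem_support_of_nonzero hf))
    have := ih _ hlt hg0 rfl
    omega

theorem eq_zero_of_support_subset_of_pow_dvd [CharZero R] (ha : a ≠ 0) {s : Finset ℕ} {f : R[X]}
    (hs : f.support ⊆ s) (hdvd : (X - C a) ^ #s ∣ f) : f = 0 := by
  by_contra hf
  have := (le_rootMultiplicity_iff hf).2 hdvd
  have := rootMultiplicity_lt_card_support_s15 ha hf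
  have := card_le_card hs
  omega

end RootMultiplicity

variable {K : Type*} [Field K]

theorem exists_eq_smul_of_support_subset_of_pow_dvd [CharZero K] {a : K} (ha : a ≠ 0)
    {s : Finset ℕ} {f g : K[X]} (hf0 : f ≠ 0) (hfs : f.support ⊆ s) (hgs : g.support ⊆ s)
    (hf : (X - C a) ^ (#s - 1) ∣ f) (hg : (X - C a) ^ (#s - 1) ∣ g) : ∃ c : K, g = c • f := by
  set t := f.natDegree
  have hft : f.coeff t ≠ 0 := leadingCoeff_ne_zero.2 hf0
  set h := f.coeff t • g - g.coeff t • f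
  have hhs : h.support ⊆ s.erase t := by
    intro j hj
    rw [mem_support_iff] at hj
    refine mem_erase.2 ⟨?_, ?_⟩
    · rintro rfl
      simp [h, mul_comm] at hj
    · by_contra hjs
      simp [h, notMem_support_iff.1 fun hj' => hjs (hfs hj'),
        notMem_support_iff.1 fun hj' => hjs (hgs hj')] at hj
  have hh : h = 0 := by
    refine eq_zero_of_support_subset_of_pow_dvd ha hhs ?_
    rw [card_erase_of_mem (hfs (mem_support_iff.2 hft))]
    exact dvd_sub (dvd_smul_of_dvd _ hg) (dvd_smul_of_dvd _ hf)
  refine ⟨(f.coeff t)⁻¹ * g.coeff t, ?_⟩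
  rw [mul_smul, ← sub_eq_zero.1 hh, smul_smul, inv_mul_cancel₀ hft, one_smul]

theorem exists_mem_ne_zero_forall_coeff_eq_zero {V : Submodule K K[X]} [FiniteDimensional K V]
    {s : Finset ℕ} (hs : #s < finrank K V) : ∃ f ∈ V, f ≠ 0 ∧ ∀ j ∈ s, f.coeff j = 0 := by
  let L : V →ₗ[K] s → K := LinearMap.pi fun j => (lcoeff K j).comp V.subtype
  obtain ⟨f, hf, hf0⟩ :=
    exists_mem_ne_zero_of_ne_bot (LinearMap.ker_ne_bot_of_finrank_lt (f := L) (by simpa))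
  refine ⟨f, f.2, by simpa using hf0, fun j hj => ?_⟩
  simpa [L] using congrFun (LinearMap.mem_ker.1 hf) ⟨j, hj⟩

structure Interleaved {n : ℕ} (σ D : Fin (n + 1) → ℕ) : Prop where
  le : ∀ i, σ i ≤ D i
  lt : ∀ {i j}, i < j → D i < σ j

namespace Interleaved

variable {n : ℕ} {σ D : Fin (n + 1) → ℕ}

theorem of_lt_succ (hle : ∀ i, σ i ≤ D i) (hlt : ∀ i : Fin n, D i.castSucc < σ i.succ) :
    Interleaved σ D := by
  refine ⟨hle, fun {i j} hij => ?_⟩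
  obtain ⟨k, rfl⟩ := Fin.exists_succ_eq_of_ne_zero (Fin.ne_zero_of_lt hij)
  have hD : Monotone D := Fin.monotone_iff_le_succ.2 fun k => (hlt k).le.trans (hle _)
  exact (hD (Fin.le_castSucc_iff.2 hij)).trans_lt (hlt k)

theorem strictMono_lower (hI : Interleaved σ D) : StrictMono σ :=
  fun _ _ h => (hI.le _).trans_lt (hI.lt h)

theorem strictMono_upper (hI : Interleaved σ D) : StrictMono D :=
  fun _ _ h => (hI.lt h).trans_le (hI.le _)

theorem pairwise_disjoint_Icc (hI : Interleaved σ D) :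
    Pairwise (Disjoint on fun i => Icc (σ i) (D i)) := by
  intro i j hij
  rw [onFun, disjoint_left]
  intro x hxi hxj
  rw [mem_Icc] at hxi hxj
  rcases hij.lt_or_gt with h | h
  · have := hI.lt h; omega
  · have := hI.lt h; omega

theorem card_biUnion_Icc (hI : Interleaved σ D) :
    (#(univ.biUnion fun i => Icc (σ i) (D i)) : ℤ) = ∑ i, (D i : ℤ) - ∑ i, (σ i : ℤ) + (n + 1) := by
  rw [card_biUnion fun i _ j _ hij => hI.pairwise_disjoint_Icc hij]
  push_cast [Nat.card_Icc, Nat.cast_sub ((hI.le _).trans (Nat.le_succ _))]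
  simp only [sum_sub_distrib, sum_add_distrib, sum_const, card_univ, Fintype.card_fin,
    nsmul_eq_mul, mul_one]
  push_cast
  ring

end Interleaved

structure HasDegreesAndOrders {n : ℕ} (V : Submodule K K[X]) (D σ : Fin (n + 1) → ℕ) : Prop where
  finrank_eq : finrank K V = n + 1
  natDegree_mem : ∀ f ∈ V, f ≠ 0 → f.natDegree ∈ Set.range D
  natTrailingDegree_mem : ∀ f ∈ V, f ≠ 0 → f.natTrailingDegree ∈ Set.range σ

namespace HasDegreesAndOrders

variable {n : ℕ} {V : Submodule K K[X]} {D σ : Fin (n + 1) → ℕ}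

theorem of_subset (hrank : finrank K V = n + 1)
    (hdeg : {k | ∃ f ∈ V, f ≠ 0 ∧ f.natDegree = k} ⊆ Set.range D)
    (hord : {k | ∃ f ∈ V, f ≠ 0 ∧ f.rootMultiplicity 0 = k} ⊆ Set.range σ) :
    HasDegreesAndOrders V D σ :=
  ⟨hrank, fun f hf hf0 => hdeg ⟨f, hf, hf0, rfl⟩,
    fun f hf hf0 => hord ⟨f, hf, hf0, rootMultiplicity_eq_natTrailingDegree'⟩⟩

theorem finiteDimensional (hV : HasDegreesAndOrders V D σ) : FiniteDimensional K V :=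
  Module.finite_of_finrank_pos (hV.finrank_eq ▸ n.succ_pos)

theorem exists_mem_ne_zero_support_subset_Icc (hV : HasDegreesAndOrders V D σ)
    (hI : Interleaved σ D) (i : Fin (n + 1)) :
    ∃ e ∈ V, e ≠ 0 ∧ e.support ⊆ Icc (σ i) (D i) := by
  have := hV.finiteDimensional
  have hcard : #((Ioi i).image D ∪ (Iio i).image σ) < finrank K V := by
    have := card_union_le ((Ioi i).image D) ((Iio i).image σ)
    have := card_image_le (s := Ioi i) (f := D)
    have := card_image_le (s := Iio i) (f := σ)
    simp only [Fin.card_Ioi, Fin.card_Iio, hV.finrank_eq] at *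
    omega
  obtain ⟨e, heV, he0, hcoeff⟩ := exists_mem_ne_zero_forall_coeff_eq_zero hcard
  refine ⟨e, heV, he0, fun j hj => mem_Icc.2 ⟨?_, ?_⟩⟩
  · obtain ⟨k, hk⟩ := hV.natTrailingDegree_mem e heV he0
    refine le_trans ?_ (natTrailingDegree_le_of_mem_supp j hj)
    rw [← hk]
    by_contra! hki
    refine mem_support_iff.1 (natTrailingDegree_mem_support_of_nonzero he0) (hcoeff _ ?_)
    exact mem_union_right _ (mem_image.2 ⟨k, mem_Iio.2 (hI.strictMono_lower.lt_iff_lt.1 hki), hk⟩)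
  · obtain ⟨k, hk⟩ := hV.natDegree_mem e heV he0
    refine (le_natDegree_of_mem_supp j hj).trans ?_
    rw [← hk]
    by_contra! hik
    refine mem_support_iff.1 (natDegree_mem_support_of_nonzero he0) (hcoeff _ ?_)
    exact mem_union_left _ (mem_image.2 ⟨k, mem_Ioi.2 (hI.strictMono_upper.lt_iff_lt.1 hik), hk⟩)

theorem exists_support_subset_Icc_eq_span (hV : HasDegreesAndOrders V D σ) (hI : Interleaved σ D) :
    ∃ e : Fin (n + 1) → K[X], (∀ i, (e i).support ⊆ Icc (σ i) (D i)) ∧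
      V = span K (Set.range e) := by
  have := hV.finiteDimensional
  choose e heV he0 hes using hV.exists_mem_ne_zero_support_subset_Icc hI
  have hli := linearIndependent_of_support_subset hI.pairwise_disjoint_Icc he0 hes
  refine ⟨e, hes, (eq_of_le_of_finrank_eq ?_ ?_).symm⟩
  · exact span_le.2 (Set.range_subset_iff.2 heV)
  · rw [finrank_span_eq_card hli, Fintype.card_fin, hV.finrank_eq]

theorem support_subset_biUnion (hV : HasDegreesAndOrders V D σ) (hI : Interleaved σ D)
    {f : K[X]} (hf : f ∈ V) : f.support ⊆ univ.biUnion fun i => Icc (σ i) (D i) := by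
  obtain ⟨e, hes, rfl⟩ := hV.exists_support_subset_Icc_eq_span hI
  set S := univ.biUnion fun i => Icc (σ i) (D i)
  suffices span K (Set.range e) ≤ LinearMap.eqLocus (restrictSupport S) LinearMap.id by
    have hfix : restrictSupport S f = f := this hf
    exact hfix ▸ support_restrictSupport_subset
  refine span_le.2 (Set.range_subset_iff.2 fun i => ?_)
  exact restrictSupport_eq_self
    ((hes i).trans (subset_biUnion_of_mem (fun i => Icc (σ i) (D i)) (mem_univ i)))

theorem restrictSupport_mem (hV : HasDegreesAndOrders V D σ) (hI : Interleaved σ D)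
    {f : K[X]} (hf : f ∈ V) (i : Fin (n + 1)) : restrictSupport (Icc (σ i) (D i)) f ∈ V := by
  obtain ⟨e, hes, rfl⟩ := hV.exists_support_subset_Icc_eq_span hI
  suffices span K (Set.range e) ≤ (span K (Set.range e)).comap (restrictSupport (Icc (σ i) (D i)))
    from this hf
  refine span_le.2 (Set.range_subset_iff.2 fun k => ?_)
  rcases eq_or_ne k i with rfl | hki
  · rw [SetLike.mem_coe, mem_comap, restrictSupport_eq_self (hes k)]
    exact subset_span ⟨k, rfl⟩
  · rw [SetLike.mem_coe, mem_comap,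
      restrictSupport_eq_zero_iff.2 ((hI.pairwise_disjoint_Icc hki).mono_left (hes k))]
    exact zero_mem _

theorem eq_span_restrictSupport [CharZero K] (hV : HasDegreesAndOrders V D σ)
    (hI : Interleaved σ D) {a : K} (ha : a ≠ 0) {p : K[X]} (hpV : p ∈ V) (hp0 : p ≠ 0)
    (hpa : (X - C a) ^ (#(univ.biUnion fun i => Icc (σ i) (D i)) - 1) ∣ p) :
    V = span K (Set.range fun i => restrictSupport (Icc (σ i) (D i)) p) := by
  have := hV.finiteDimensional
  have hne : ∀ i, restrictSupport (Icc (σ i) (D i)) p ≠ 0 := by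
    intro i hi
    have hsupp : p.support ⊆ (univ.biUnion fun i => Icc (σ i) (D i)) \ Icc (σ i) (D i) :=
      subset_sdiff.2 ⟨hV.support_subset_biUnion hI hpV, restrictSupport_eq_zero_iff.1 hi⟩
    refine hp0 (eq_zero_of_support_subset_of_pow_dvd ha hsupp (dvd_trans (pow_dvd_pow _ ?_) hpa))
    rw [card_sdiff_of_subset (subset_biUnion_of_mem (fun i => Icc (σ i) (D i)) (mem_univ i))]
    have : 0 < #(Icc (σ i) (D i)) := by simpa using hI.le i
    omega
  have hli := linearIndependent_of_support_subset hI.pairwise_disjoint_Icc hne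
    fun i => support_restrictSupport_subset
  refine (eq_of_le_of_finrank_eq ?_ ?_).symm
  · exact span_le.2 (Set.range_subset_iff.2 (hV.restrictSupport_mem hI hpV))
  · rw [finrank_span_eq_card hli, Fintype.card_fin, hV.finrank_eq]

end HasDegreesAndOrders

end Polynomial

theorem special_schubert_intersection_unique_general (N d : ℕ)
    (D : Fin (N + 1) → ℕ) (hDlast : D (Fin.last N) = d)
    (ρ : Fin N → ℕ)
    (hinter : ∀ i : Fin N, D i.castSucc < ρ i.rev ∧ ρ i.rev ≤ D i.succ)
    (m : ℕ)
    (hm : (m : ℤ) = (d : ℤ) + (∑ i : Fin N, (D i.castSucc : ℤ)) - ∑ i : Fin N, (ρ i : ℤ))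
    (V₁ V₂ : Submodule ℂ (Polynomial ℂ))
    (h₁rank : Module.finrank ℂ V₁ = N + 1)
    (h₁dset : {k : ℕ | ∃ g ∈ V₁, g ≠ 0 ∧ g.natDegree = k} = Set.range D)
    (h₁ρset : {k : ℕ | ∃ g ∈ V₁, g ≠ 0 ∧ Polynomial.rootMultiplicity 0 g = k}
      = insert 0 (Set.range ρ))
    (h₁p : ∃ p ∈ V₁, p ≠ 0 ∧ m + N ≤ Polynomial.rootMultiplicity (-1) p)
    (h₂rank : Module.finrank ℂ V₂ = N + 1)
    (h₂dset : {k : ℕ | ∃ g ∈ V₂, g ≠ 0 ∧ g.natDegree = k} = Set.range D)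
    (h₂ρset : {k : ℕ | ∃ g ∈ V₂, g ≠ 0 ∧ Polynomial.rootMultiplicity 0 g = k}
      = insert 0 (Set.range ρ))
    (h₂p : ∃ p ∈ V₂, p ≠ 0 ∧ m + N ≤ Polynomial.rootMultiplicity (-1) p) :
    V₁ = V₂ := by
  obtain ⟨p₁, hp₁V, hp₁0, hp₁m⟩ := h₁p
  obtain ⟨p₂, hp₂V, hp₂0, hp₂m⟩ := h₂p
  set σ : Fin (N + 1) → ℕ := Fin.cases 0 fun i => ρ i.rev
  have hI : Interleaved σ D :=
    .of_lt_succ (Fin.cases (Nat.zero_le _) fun i => (hinter i).2) fun i => (hinter i).1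
  have hσ : Set.range σ = insert 0 (Set.range ρ) := by
    rw [Fin.range_fin_succ]
    exact congrArg (insert 0) (Fin.rev_surjective.range_comp ρ)
  have hcard : #(univ.biUnion fun i => Icc (σ i) (D i)) - 1 = m + N := by
    have hσsum : ∑ i, (σ i : ℤ) = ∑ i, (ρ i : ℤ) := by
      rw [Fin.sum_univ_succ]
      exact (zero_add _).trans (Fintype.sum_equiv Fin.revPerm _ _ fun _ => rfl)
    have := hI.card_biUnion_Icc
    rw [hσsum, Fin.sum_univ_castSucc, hDlast] at this
    omega
  have hdvd : ∀ p : ℂ[X], m + N ≤ rootMultiplicity (-1) p →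
      (X - C (-1)) ^ (#(univ.biUnion fun i => Icc (σ i) (D i)) - 1) ∣ p := fun p hp =>
    hcard ▸ (pow_dvd_pow _ hp).trans (pow_rootMultiplicity_dvd p (-1))
  have hV₁ : HasDegreesAndOrders V₁ D σ :=
    .of_subset h₁rank h₁dset.subset (h₁ρset.trans hσ.symm).subset
  have hV₂ : HasDegreesAndOrders V₂ D σ :=
    .of_subset h₂rank h₂dset.subset (h₂ρset.trans hσ.symm).subset
  have hp₁V₂ : p₁ ∈ V₂ := by
    obtain ⟨c, rfl⟩ := exists_eq_smul_of_support_subset_of_pow_dvd (by norm_num) hp₂0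
      (hV₂.support_subset_biUnion hI hp₂V) (hV₁.support_subset_biUnion hI hp₁V) (hdvd p₂ hp₂m)
      (hdvd _ hp₁m)
    exact V₂.smul_mem c hp₂V
  rw [hV₁.eq_span_restrictSupport hI (by norm_num) hp₁V hp₁0 (hdvd p₁ hp₁m),
    hV₂.eq_span_restrictSupport hI (by norm_num) hp₁V₂ hp₁0 (hdvd p₁ hp₁m)]

/-- Uniqueness for special Schubert intersections (the Pieri-formula statement).
Let `N ≥ 1` and let `d_1, …, d_N, d` (encoded as `D : Fin (N+1) → ℕ` with
`D (last) = d`) and `ρ_1, …, ρ_N` (encoded as `ρ : Fin N → ℕ`) satisfy the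
interleaving `d_i < ρ_{N+1−i} ≤ d_{i+1}` for `1 ≤ i ≤ N` (with `d_{N+1} = d`), and
set `m = d + (d_1+⋯+d_N) − (ρ_1+⋯+ρ_N)`.  Then there is at most one
`(N+1)`-dimensional subspace `V` of polynomials of degree at most `d` such that:
(i) the degrees of nonzero elements of `V` are exactly `{d_1, …, d_N, d}`;
(ii) the root multiplicities at `0` of nonzero elements of `V` are exactly
`{0, ρ_N, …, ρ_1}`; and (iii) `V` contains a nonzero polynomial whose root
multiplicity at `−1` is at least `m+N`. -/
theorem special_schubert_intersection_unique (N d : ℕ) (hN : 1 ≤ N)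
    (D : Fin (N + 1) → ℕ) (hDlast : D (Fin.last N) = d)
    (ρ : Fin N → ℕ)
    (hinter : ∀ i : Fin N, D i.castSucc < ρ i.rev ∧ ρ i.rev ≤ D i.succ)
    (m : ℕ)
    (hm : (m : ℤ) = (d : ℤ) + (∑ i : Fin N, (D i.castSucc : ℤ)) - ∑ i : Fin N, (ρ i : ℤ))
    (V₁ V₂ : Submodule ℂ (Polynomial ℂ))
    (h₁deg : V₁ ≤ Polynomial.degreeLE ℂ (d : WithBot ℕ))
    (h₁rank : Module.finrank ℂ V₁ = N + 1)
    (h₁dset : {k : ℕ | ∃ g ∈ V₁, g ≠ 0 ∧ g.natDegree = k} = Set.range D)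
    (h₁ρset : {k : ℕ | ∃ g ∈ V₁, g ≠ 0 ∧ Polynomial.rootMultiplicity 0 g = k}
      = insert 0 (Set.range ρ))
    (h₁p : ∃ p ∈ V₁, p ≠ 0 ∧ m + N ≤ Polynomial.rootMultiplicity (-1) p)
    (h₂deg : V₂ ≤ Polynomial.degreeLE ℂ (d : WithBot ℕ))
    (h₂rank : Module.finrank ℂ V₂ = N + 1)
    (h₂dset : {k : ℕ | ∃ g ∈ V₂, g ≠ 0 ∧ g.natDegree = k} = Set.range D)
    (h₂ρset : {k : ℕ | ∃ g ∈ V₂, g ≠ 0 ∧ Polynomial.rootMultiplicity 0 g = k}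
      = insert 0 (Set.range ρ))
    (h₂p : ∃ p ∈ V₂, p ≠ 0 ∧ m + N ≤ Polynomial.rootMultiplicity (-1) p) :
    V₁ = V₂ :=
  special_schubert_intersection_unique_general N d D hDlast ρ hinter m hm V₁ V₂ h₁rank h₁dset h₁ρset
    h₁p h₂rank h₂dset h₂ρset h₂p
end

section
/- Let V be an (N+1)-dimensional ℂ-linear subspace of ℂ[x]. Let d_1 < d_2 < … < d_{N+1} be the distinct degrees of nonzero elements of V, and let σ_1 < σ_2 < … < σ_{N+1} be the distinct root multiplicities at 0 of nonzero elements of V, and assume σ_1 = 0 and the interleaving d_1 < σ_2 ≤ d_2 < σ_3 ≤ d_3 < ⋯ < σ_{N+1} ≤ d_{N+1}. Then V has a basis Q_1, …, Q_{N+1} such that for every i = 1, …, N+1 the polynomial Q_i has degree d_i and root multiplicity σ_i at 0. -/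
/-!
For each `i`, the polynomials of `V` of degree at most `d_i` form a subspace of dimension
at least `i + 1`, and those of order at least `σ_i` at `0` one of dimension at least
`N + 1 - i`, since polynomials with pairwise distinct degrees (or orders) are linearly
independent. The two subspaces therefore meet in some `g ≠ 0`, with `deg g = d_j` for some
`j ≤ i` and `ord₀ g = σ_k` for some `k ≥ i`. As `σ_k ≤ d_j`, and `σ_{j+1} > d_j` by the
interleaving, we get `k ≤ j`, hence `j = i = k`. The resulting `Q_i` have distinct degrees,
so they are linearly independent, and there are `dim V` of them.
-/

open Polynomial Module

namespace Polynomial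

variable {R ι : Type*}

theorem X_pow_dvd_iff_le_natTrailingDegree [Semiring R] {p : R[X]} {n : ℕ} (hp : p ≠ 0) :
    X ^ n ∣ p ↔ n ≤ p.natTrailingDegree := by
  rw [X_pow_dvd_iff]
  exact ⟨le_natTrailingDegree hp,
    fun h m hm => coeff_eq_zero_of_lt_natTrailingDegree (hm.trans_le h)⟩

variable [Ring R] [NoZeroDivisors R]

theorem linearIndependent_of_exists_isolated_coeff (f : ι → R[X])
    (h : ∀ s : Finset ι, s.Nonempty →
      ∃ i ∈ s, ∃ n, (f i).coeff n ≠ 0 ∧ ∀ j ∈ s, j ≠ i → (f j).coeff n = 0) :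
    LinearIndependent R f := by
  classical
  rw [linearIndependent_iff']
  intro s c hsum i hi
  by_contra hci
  obtain ⟨i₀, hi₀, n, hn, hzero⟩ :=
    h (s.filter fun j => c j ≠ 0) ⟨i, Finset.mem_filter.2 ⟨hi, hci⟩⟩
  rw [Finset.mem_filter] at hi₀
  have hcoeff := congrArg (coeff · n) hsum
  simp only [finsetSum_coeff, coeff_smul, smul_eq_mul, coeff_zero] at hcoeff
  rw [Finset.sum_eq_single_of_mem i₀ hi₀.1] at hcoeff
  · exact mul_ne_zero hi₀.2 hn hcoeff
  · intro j hj hji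
    by_cases hcj : c j = 0
    · rw [hcj, zero_mul]
    · rw [hzero j (Finset.mem_filter.2 ⟨hj, hcj⟩) hji, mul_zero]

theorem linearIndependent_of_injective_natDegree (f : ι → R[X]) (hf : ∀ i, f i ≠ 0)
    (hinj : Function.Injective (natDegree ∘ f)) : LinearIndependent R f := by
  refine linearIndependent_of_exists_isolated_coeff f fun s hs => ?_
  obtain ⟨i, hi, hmax⟩ := s.exists_max_image (natDegree ∘ f) hs
  refine ⟨i, hi, _, leadingCoeff_ne_zero.2 (hf i), fun j hj hji => ?_⟩
  exact coeff_eq_zero_of_natDegree_lt ((hmax j hj).lt_of_ne (hinj.ne hji))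

theorem linearIndependent_of_injective_natTrailingDegree (f : ι → R[X]) (hf : ∀ i, f i ≠ 0)
    (hinj : Function.Injective (natTrailingDegree ∘ f)) : LinearIndependent R f := by
  refine linearIndependent_of_exists_isolated_coeff f fun s hs => ?_
  obtain ⟨i, hi, hmin⟩ := s.exists_min_image (natTrailingDegree ∘ f) hs
  refine ⟨i, hi, _, coeff_natTrailingDegree_ne_zero.2 (hf i), fun j hj hji => ?_⟩
  exact coeff_eq_zero_of_lt_natTrailingDegree ((hmin j hj).lt_of_ne (hinj.ne hji).symm)

end Polynomial

section FiniteDimensional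

variable {K M ι : Type*} [DivisionRing K] [AddCommGroup M] [Module K M]

theorem LinearIndependent.card_le_finrank_of_forall_mem [Fintype ι] {W : Submodule K M}
    [FiniteDimensional K W] {f : ι → M} (hf : LinearIndependent K f) (hW : ∀ i, f i ∈ W) :
    Fintype.card ι ≤ finrank K W :=
  LinearIndependent.fintype_card_le_finrank (b := fun i => (⟨f i, hW i⟩ : W))
    (hf.of_comp W.subtype)

theorem Submodule.exists_mem_inf_ne_zero_of_finrank_lt_add {U W V : Submodule K M}
    [FiniteDimensional K V] (hU : U ≤ V) (hW : W ≤ V)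
    (h : finrank K V < finrank K U + finrank K W) : ∃ x ∈ U, x ∈ W ∧ x ≠ 0 := by
  have := Submodule.finiteDimensional_of_le hU
  have := Submodule.finiteDimensional_of_le hW
  have hsup := Submodule.finrank_mono (sup_le hU hW)
  have hsum := Submodule.finrank_sup_add_finrank_inf_eq U W
  obtain ⟨x, hx, hx0⟩ := Submodule.exists_mem_ne_zero_of_ne_bot
    (Submodule.one_le_finrank_iff.1 (by omega : 1 ≤ finrank K ↥(U ⊓ W)))
  exact ⟨x, hx.1, hx.2, hx0⟩

end FiniteDimensional

theorem Fin.le_of_le_of_interleaved {n : ℕ} {d σ : Fin (n + 1) → ℕ} (hσ : StrictMono σ)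
    (hinter : ∀ i : Fin n, d i.castSucc < σ i.succ) {j k : Fin (n + 1)} (h : σ k ≤ d j) :
    k ≤ j := by
  by_contra! hjk
  obtain ⟨j, rfl⟩ := Fin.exists_castSucc_eq.2 (hjk.trans_le (Fin.le_last k)).ne
  have := hσ.monotone (Fin.castSucc_lt_iff_succ_le.1 hjk)
  have := hinter j
  omega

section AdaptedBasis

variable {K : Type*} [Field K] {n : ℕ} {V : Submodule K K[X]} [FiniteDimensional K V]
  {d σ : Fin (n + 1) → ℕ}

theorem le_finrank_degreeLE_inf (hd : StrictMono d)
    (hdV : ∀ j, ∃ g ∈ V, g ≠ 0 ∧ g.natDegree = d j) (i : Fin (n + 1)) :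
    (i : ℕ) + 1 ≤ finrank K ↥(degreeLE K (d i) ⊓ V) := by
  choose P hPV hP0 hPd using hdV
  have hP : LinearIndependent K fun j : Finset.Iic i => P j :=
    linearIndependent_of_injective_natDegree _ (fun j => hP0 j) <| by
      simpa [Function.comp_def, hPd] using hd.injective.comp Subtype.val_injective
  have := hP.card_le_finrank_of_forall_mem (W := degreeLE K (d i) ⊓ V) fun j =>
    ⟨mem_degreeLE.2 (natDegree_le_iff_degree_le.1
      (hPd j ▸ hd.monotone (Finset.mem_Iic.1 j.2))), hPV j⟩
  rwa [Fintype.card_coe, Fin.card_Iic] at this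

theorem le_finrank_span_X_pow_inf (hσ : StrictMono σ)
    (hσV : ∀ j, ∃ g ∈ V, g ≠ 0 ∧ g.natTrailingDegree = σ j) (i : Fin (n + 1)) :
    n + 1 - i ≤ finrank K ↥((Ideal.span {X ^ σ i}).restrictScalars K ⊓ V) := by
  choose P hPV hP0 hPt using hσV
  have hP : LinearIndependent K fun j : Finset.Ici i => P j :=
    linearIndependent_of_injective_natTrailingDegree _ (fun j => hP0 j) <| by
      simpa [Function.comp_def, hPt] using hσ.injective.comp Subtype.val_injective
  have := hP.card_le_finrank_of_forall_mem
    (W := (Ideal.span {X ^ σ i}).restrictScalars K ⊓ V) fun j =>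
    ⟨Ideal.mem_span_singleton.2 ((X_pow_dvd_iff_le_natTrailingDegree (hP0 j)).2
      (hPt j ▸ hσ.monotone (Finset.mem_Ici.1 j.2))), hPV j⟩
  rwa [Fintype.card_coe, Fin.card_Ici] at this

theorem exists_mem_natDegree_eq_natTrailingDegree_eq (hrank : finrank K V = n + 1)
    (hd : StrictMono d) (hσ : StrictMono σ)
    (hdset : {k : ℕ | ∃ g ∈ V, g ≠ 0 ∧ g.natDegree = k} = Set.range d)
    (hσset : {k : ℕ | ∃ g ∈ V, g ≠ 0 ∧ g.natTrailingDegree = k} = Set.range σ)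
    (hinter : ∀ i : Fin n, d i.castSucc < σ i.succ) (i : Fin (n + 1)) :
    ∃ g ∈ V, g ≠ 0 ∧ g.natDegree = d i ∧ g.natTrailingDegree = σ i := by
  have hdV (j) : d j ∈ {k : ℕ | ∃ g ∈ V, g ≠ 0 ∧ g.natDegree = k} :=
    hdset ▸ ⟨j, rfl⟩
  have hσV (j) : σ j ∈ {k : ℕ | ∃ g ∈ V, g ≠ 0 ∧ g.natTrailingDegree = k} :=
    hσset ▸ ⟨j, rfl⟩
  have hU := le_finrank_degreeLE_inf hd hdV i
  have hW := le_finrank_span_X_pow_inf hσ hσV i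
  obtain ⟨g, hgd, hgσ, hg0⟩ := Submodule.exists_mem_inf_ne_zero_of_finrank_lt_add
    (inf_le_right : degreeLE K (d i) ⊓ V ≤ V)
    (inf_le_right : (Ideal.span {X ^ σ i}).restrictScalars K ⊓ V ≤ V) (by omega)
  have hgV : g ∈ V := hgd.2
  obtain ⟨j, hj⟩ : g.natDegree ∈ Set.range d := hdset ▸ ⟨g, hgV, hg0, rfl⟩
  obtain ⟨k, hk⟩ : g.natTrailingDegree ∈ Set.range σ := hσset ▸ ⟨g, hgV, hg0, rfl⟩
  have hji : j ≤ i := hd.le_iff_le.1 <|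
    hj ▸ natDegree_le_iff_degree_le.2 (mem_degreeLE.1 hgd.1)
  have hik : i ≤ k := hσ.le_iff_le.1 <|
    hk ▸ (X_pow_dvd_iff_le_natTrailingDegree hg0).1 (Ideal.mem_span_singleton.1 hgσ.1)
  have hkj : k ≤ j :=
    Fin.le_of_le_of_interleaved hσ hinter (hj ▸ hk ▸ natTrailingDegree_le_natDegree g)
  obtain rfl : j = i := le_antisymm hji (hik.trans hkj)
  obtain rfl : k = j := le_antisymm hkj hik
  exact ⟨g, hgV, hg0, hj.symm, hk.symm⟩

end AdaptedBasis

theorem adapted_basis_exists_general (N : ℕ) (V : Submodule ℂ (Polynomial ℂ))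
    (hrank : Module.finrank ℂ V = N + 1)
    (dseq σ : Fin (N + 1) → ℕ)
    (hdmono : StrictMono dseq) (hσmono : StrictMono σ)
    (hdset : {k : ℕ | ∃ g ∈ V, g ≠ 0 ∧ g.natDegree = k} = Set.range dseq)
    (hσset : {k : ℕ | ∃ g ∈ V, g ≠ 0 ∧ Polynomial.rootMultiplicity 0 g = k}
      = Set.range σ)
    (hinter : ∀ i : Fin N, dseq i.castSucc < σ i.succ ∧ σ i.succ ≤ dseq i.succ) :
    ∃ Q : Fin (N + 1) → Polynomial ℂ,
      (∀ i, Q i ∈ V) ∧ LinearIndependent ℂ Q ∧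
      Submodule.span ℂ (Set.range Q) = V ∧
      ∀ i, (Q i).natDegree = dseq i ∧ Polynomial.rootMultiplicity 0 (Q i) = σ i := by
  have := Module.finite_of_finrank_eq_succ hrank
  simp_rw [rootMultiplicity_eq_natTrailingDegree'] at hσset ⊢
  choose Q hQV hQ0 hQd hQt using exists_mem_natDegree_eq_natTrailingDegree_eq hrank hdmono
    hσmono hdset hσset fun i => (hinter i).1
  have hQ : LinearIndependent ℂ Q := linearIndependent_of_injective_natDegree Q hQ0 <| by
    simpa [Function.comp_def, hQd] using hdmono.injective
  refine ⟨Q, hQV, hQ, ?_, fun i => ⟨hQd i, hQt i⟩⟩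
  refine Submodule.eq_of_le_of_finrank_le (Submodule.span_le.2 (Set.range_subset_iff.2 hQV)) ?_
  rw [hrank, finrank_span_eq_card hQ, Fintype.card_fin]

/-- Let `V` be an `(N+1)`-dimensional subspace of `ℂ[x]`, let `d_1 < … < d_{N+1}` be
the distinct degrees of nonzero elements of `V` and `σ_1 < … < σ_{N+1}` the distinct
root multiplicities at `0` of nonzero elements of `V`, with `σ_1 = 0` and the
interleaving `d_1 < σ_2 ≤ d_2 < σ_3 ≤ d_3 < ⋯ < σ_{N+1} ≤ d_{N+1}`.  Then `V` has a
basis `Q_1, …, Q_{N+1}` with `Q_i` of degree `d_i` and root multiplicity `σ_i`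
at `0`. -/
theorem adapted_basis_exists (N : ℕ) (V : Submodule ℂ (Polynomial ℂ))
    (hrank : Module.finrank ℂ V = N + 1)
    (dseq σ : Fin (N + 1) → ℕ)
    (hdmono : StrictMono dseq) (hσmono : StrictMono σ)
    (hdset : {k : ℕ | ∃ g ∈ V, g ≠ 0 ∧ g.natDegree = k} = Set.range dseq)
    (hσset : {k : ℕ | ∃ g ∈ V, g ≠ 0 ∧ Polynomial.rootMultiplicity 0 g = k}
      = Set.range σ)
    (hσ0 : σ 0 = 0)
    (hinter : ∀ i : Fin N, dseq i.castSucc < σ i.succ ∧ σ i.succ ≤ dseq i.succ) :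
    ∃ Q : Fin (N + 1) → Polynomial ℂ,
      (∀ i, Q i ∈ V) ∧ LinearIndependent ℂ Q ∧
      Submodule.span ℂ (Set.range Q) = V ∧
      ∀ i, (Q i).natDegree = dseq i ∧ Polynomial.rootMultiplicity 0 (Q i) = σ i :=
  adapted_basis_exists_general N V hrank dseq σ hdmono hσmono hdset hσset hinter
end
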